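/- arXiv:1711.00567 — 4 statements merged into one kernel-verified Lean document; each statement's English description precedes it below -/
import Mathlib

section
/- In the setting below, let p ∈ O ∖ {p_S}, write Φ(t,p) = (x(t), y(t), z(t)), and let θ : ℝ → ℝ be any continuous function such that θ(t) is an argument of the complex number x(t) + i·y(t) for every t (such θ exists because the orbit of p avoids the poles). Then the function t ↦ (x(t)² + y(t)²)·G(Φ(t,p))·e^{−2θ(t)} is constant on ℝ. -/
noncomputable section

open Filter Topology Set

abbrev E3 := EuclideanSpace ℝ (Fin 3)
abbrev E2 := EuclideanSpace ℝ (Fin 2)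

/-- The unit sphere in ℝ³. -/
def Sph : Set E3 := Metric.sphere 0 1

/-- Constructing a point of ℝ³ from its coordinates. -/
def pt (a b c : ℝ) : E3 := WithLp.toLp 2 ![a, b, c]

/-- Inverse of the stereographic projection from the north pole. -/
def sigmaN (q : E2) : E3 :=
  pt (2 * q 0 / (q 0 ^ 2 + q 1 ^ 2 + 1)) (2 * q 1 / (q 0 ^ 2 + q 1 ^ 2 + 1))
     ((q 0 ^ 2 + q 1 ^ 2 - 1) / (q 0 ^ 2 + q 1 ^ 2 + 1))

/-- Inverse of the stereographic projection from the south pole. -/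
def sigmaS (q : E2) : E3 :=
  pt (2 * q 0 / (q 0 ^ 2 + q 1 ^ 2 + 1)) (-(2 * q 1) / (q 0 ^ 2 + q 1 ^ 2 + 1))
     ((1 - (q 0 ^ 2 + q 1 ^ 2)) / (q 0 ^ 2 + q 1 ^ 2 + 1))

/-- A map defined on the sphere is C^∞ if its compositions with the inverse
stereographic projections are C^∞. -/
def SmoothOnSphere {F : Type*} [NormedAddCommGroup F] [NormedSpace ℝ F] (g : E3 → F) : Prop :=
  ContDiff ℝ (⊤ : ℕ∞) (g ∘ sigmaN) ∧ ContDiff ℝ (⊤ : ℕ∞) (g ∘ sigmaS)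

/-- A map defined on the sphere is real-analytic on `U` if its compositions with the inverse
stereographic projections are real-analytic on the corresponding planar sets. -/
def AnalyticOnSphere {F : Type*} [NormedAddCommGroup F] [NormedSpace ℝ F]
    (g : E3 → F) (U : Set E3) : Prop :=
  AnalyticOnNhd ℝ (g ∘ sigmaN) (sigmaN ⁻¹' U) ∧ AnalyticOnNhd ℝ (g ∘ sigmaS) (sigmaS ⁻¹' U)

/-- A vector field on the sphere: tangent to the sphere at every point. -/
def IsVectorField (f : E3 → E3) : Prop :=
  ∀ u ∈ Sph, f u 0 * u 0 + f u 1 * u 1 + f u 2 * u 2 = 0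

/-- `Φ` is the (complete) flow of the vector field `f` on the sphere. -/
def IsFlowOf (f : E3 → E3) (Φ : ℝ → E3 → E3) : Prop :=
  (∀ p ∈ Sph, ∀ t, Φ t p ∈ Sph) ∧ (∀ p ∈ Sph, Φ 0 p = p) ∧
  (∀ p ∈ Sph, ∀ t, HasDerivAt (fun s => Φ s p) (f (Φ t p)) t)

/-- The ω-limit set of `p`: accumulation points of `Φ t p` as `t → +∞`. -/
def omegaLimitSet (Φ : ℝ → E3 → E3) (p : E3) : Set E3 :=
  {u | ∃ T : ℕ → ℝ, Tendsto T atTop atTop ∧ Tendsto (fun n => Φ (T n) p) atTop (𝓝 u)}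

/-- The α-limit set of `p`: accumulation points of `Φ t p` as `t → -∞`. -/
def alphaLimitSet (Φ : ℝ → E3 → E3) (p : E3) : Set E3 :=
  {u | ∃ T : ℕ → ℝ, Tendsto T atTop atBot ∧ Tendsto (fun n => Φ (T n) p) atTop (𝓝 u)}

/-- The boundary of `A` relative to the subspace `X`. -/
def frontierIn (X A : Set E3) : Set E3 := X ∩ closure A ∩ closure (X \ A)

/-- The interior of `A` relative to the subspace `X`. -/
def relInterior (X A : Set E3) : Set E3 := {u ∈ X | A ∈ 𝓝[X] u}

/-- `O` is relatively open in `X`. -/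
def RelOpen (X O : Set E3) : Prop := ∃ U, IsOpen U ∧ O = U ∩ X

/-- A region of `X`: a nonempty, relatively open, connected subset. -/
def IsRegionIn (X O : Set E3) : Prop := O.Nonempty ∧ RelOpen X O ∧ IsConnected O

/-- A shrub: a nonempty proper subset of the sphere which, with the subspace topology,
is a simply connected Peano space (compact, connected, locally connected; metrizability
is automatic). -/
def IsShrub (A : Set E3) : Prop :=
  A ⊆ Sph ∧ A.Nonempty ∧ A ≠ Sph ∧ IsCompact A ∧ IsConnected A ∧
  LocallyConnectedSpace A ∧ SimplyConnectedSpace A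

/-- An arc with endpoints `a` and `b`, i.e. an injective continuous image of `[0,1]`. -/
def IsArcFrom (S : Set E3) (a b : E3) : Prop :=
  ∃ φ : ℝ → E3, ContinuousOn φ (Icc 0 1) ∧ InjOn φ (Icc 0 1) ∧
    φ '' (Icc 0 1) = S ∧ φ 0 = a ∧ φ 1 = b

def IsArc (S : Set E3) : Prop := ∃ a b, IsArcFrom S a b

/-- An open arc: a set homeomorphic to ℝ. -/
def IsOpenArc (S : Set E3) : Prop := Nonempty (ℝ ≃ₜ S)

/-- A circle: a set homeomorphic to the unit circle. -/
def IsCircle (S : Set E3) : Prop :=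
  Nonempty ((Metric.sphere (0 : E2) 1 : Set E2) ≃ₜ S)

/-- A disk: a set homeomorphic to the closed unit disc. -/
def IsDisk (S : Set E3) : Prop :=
  Nonempty ((Metric.closedBall (0 : E2) 1 : Set E2) ≃ₜ S)

/-- An `n`-star with center `c`. -/
def IsNStar (S : Set E3) (n : ℕ) (c : E3) : Prop :=
  if n = 0 then S = {c}
  else ∃ B : Fin n → Set E3, (∀ i, ∃ b, IsArcFrom (B i) c b) ∧
    (∀ i j, i ≠ j → B i ∩ B j = {c}) ∧ S = ⋃ i, B i

/-- `p` is a star point of `X` of order `n`: some `n`-star with center `p` is a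
neighbourhood of `p` in `X`. -/
def IsStarPointOfOrder (X : Set E3) (p : E3) (n : ℕ) : Prop :=
  ∃ S, S ⊆ X ∧ S ∈ 𝓝[X] p ∧ IsNStar S n p

def IsStarPoint (X : Set E3) (p : E3) : Prop := ∃ n, IsStarPointOfOrder X p n

/-- A leaf of `A`: a disk contained in `A`, maximal among disks contained in `A`. -/
def IsLeaf (A D : Set E3) : Prop :=
  IsDisk D ∧ D ⊆ A ∧ ∀ D', IsDisk D' → D' ⊆ A → D ⊆ D' → D' = D

/-- A sprig of `A` with endpoints `a`, `b`: an arc in `A` all of whose non-endpoint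
points are 2-star points of `A`. -/
def IsSprigFrom (A L : Set E3) (a b : E3) : Prop :=
  L ⊆ A ∧ IsArcFrom L a b ∧ ∀ u ∈ L, u ≠ a → u ≠ b → IsStarPointOfOrder A u 2

def IsSprig (A L : Set E3) : Prop := ∃ a b, IsSprigFrom A L a b

def IsInteriorPt (A : Set E3) (u : E3) : Prop := u ∈ relInterior Sph A

def IsExteriorPt (A : Set E3) (u : E3) : Prop :=
  u ∈ A ∧ (∃ D, IsLeaf A D ∧ u ∈ frontierIn Sph D) ∧ IsConnected (A \ {u})

def IsSprigPt (A : Set E3) (u : E3) : Prop :=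
  ∃ L a b, IsSprigFrom A L a b ∧ u ∈ L ∧ u ≠ a ∧ u ≠ b

/-- A bud of the shrub `A`: a point which is neither an interior point, nor an
exterior point, nor a sprig point. -/
def IsBud (A : Set E3) (u : E3) : Prop :=
  u ∈ A ∧ ¬IsInteriorPt A u ∧ ¬IsExteriorPt A u ∧ ¬IsSprigPt A u

/-- An odd bud of `A`. -/
def IsOddBud (A : Set E3) (u : E3) : Prop :=
  IsBud A u ∧
  (¬IsStarPoint (frontierIn Sph A) u ∨
    ((∀ D, IsLeaf A D → u ∉ D) ∧ ∃ n, Odd n ∧ IsStarPointOfOrder (frontierIn Sph A) u n))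

def budSet (A : Set E3) : Set E3 := {u | IsBud A u}

/-- A realizable shrub: its set of buds is totally disconnected. -/
def IsRealizableShrub (A : Set E3) : Prop :=
  IsShrub A ∧ IsTotallyDisconnected (budSet A)

/-- A cactus: a shrub which is the union of finitely many of its leaves. -/
def IsCactus (C : Set E3) : Prop :=
  IsShrub C ∧ ∃ (n : ℕ) (D : Fin n → Set E3), (∀ i, IsLeaf C (D i)) ∧ C = ⋃ i, D i

/-- An `m`-prickly cactus: the union of a cactus and `m` sprigs, each having an
endpoint in the cactus. -/
def IsPricklyCactus (A : Set E3) (m : ℕ) : Prop :=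
  ∃ (D : Set E3) (L : Fin m → Set E3) (a b : Fin m → E3),
    IsCactus D ∧ (∀ i, IsSprigFrom A (L i) (a i) (b i)) ∧
    (∀ i, a i ∈ D ∨ b i ∈ D) ∧ A = D ∪ ⋃ i, L i

/-- `K` is a union of leaves of `A`. -/
def IsLeafUnion (A K : Set E3) : Prop :=
  ∃ 𝒟 : Set (Set E3), (∀ D ∈ 𝒟, IsLeaf A D) ∧ K = ⋃₀ 𝒟

/-- An odd cactus of `A`: a maximal connected union of leaves of `A` which is
neighboured in `A` by an `n`-prickly cactus with `n` odd. -/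
def IsOddCactus (A K : Set E3) : Prop :=
  IsLeafUnion A K ∧ IsConnected K ∧
  (∀ K', IsLeafUnion A K' → IsConnected K' → K ⊆ K' → K' = K) ∧
  ∃ (n : ℕ) (P : Set E3), Odd n ∧ IsPricklyCactus P n ∧ P ⊆ A ∧
    K ⊆ P ∧ ∀ u ∈ K, P ∈ 𝓝[A] u

/-- A self-homeomorphism of the sphere (inverse continuity is automatic by
compactness). -/
def IsSphereHomeo (h : E3 → E3) : Prop :=
  BijOn h Sph Sph ∧ ContinuousOn h Sph

/-- Points of `Ω` having a neighbourhood in `Ω` homeomorphic to ℝ. -/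
def edgePts (Ω : Set E3) : Set E3 :=
  {u ∈ Ω | ∃ N, N ⊆ Ω ∧ N ∈ 𝓝[Ω] u ∧ IsOpenArc N}

/-- An edge of `Ω`: a connected component of the set of edge points. -/
def IsEdge (Ω E : Set E3) : Prop :=
  ∃ x ∈ edgePts Ω, E = connectedComponentIn (edgePts Ω) x

/-- The orbit of `p` accumulates at `u` from `S`. -/
def AccumFromIn (Φ : ℝ → E3 → E3) (p u : E3) (S : Set E3) : Prop :=
  ∃ T : ℕ → ℝ, Tendsto T atTop atTop ∧ (∀ n, Φ (T n) p ∈ S) ∧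
    Tendsto (fun n => Φ (T n) p) atTop (𝓝 u)

/-- `u` is a two-sided point of the edge `E` (with respect to the orbit of `p`). -/
def IsTwoSidedPt (Φ : ℝ → E3 → E3) (p : E3) (E : Set E3) (u : E3) : Prop :=
  ∃ D D₁ D₂ : Set E3, IsDisk D ∧ D ⊆ Sph ∧ D ∈ 𝓝[Sph] u ∧ D₁ ≠ D₂ ∧
    (∃ x ∈ D \ E, D₁ = connectedComponentIn (D \ E) x) ∧
    (∃ x ∈ D \ E, D₂ = connectedComponentIn (D \ E) x) ∧
    (∀ x ∈ D \ E, connectedComponentIn (D \ E) x = D₁ ∨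
      connectedComponentIn (D \ E) x = D₂) ∧
    AccumFromIn Φ p u D₁ ∧ AccumFromIn Φ p u D₂

def pN : E3 := pt 0 0 1
def pS : E3 := pt 0 0 (-1)

/-- The square of `F` transported radially: `G(u) = F(u/‖u‖)²`. -/
def Gm (F : E3 → ℝ) (u : E3) : ℝ := (F (‖u‖⁻¹ • u)) ^ 2

/-- The `i`-th partial derivative of `Gm F`. -/
def dG (F : E3 → ℝ) (i : Fin 3) (u : E3) : ℝ :=
  fderiv ℝ (Gm F) u (EuclideanSpace.single i 1)

/-- The explicit vector field built from `F`. -/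
def fVF (F : E3 → ℝ) (u : E3) : E3 :=
  pt (2 * u 2 * (u 1 - u 0) * Gm F u +
        (u 0 ^ 2 + u 1 ^ 2) * (-(u 1) * dG F 2 u + u 2 * dG F 1 u))
     (-(2 * u 2 * (u 0 + u 1)) * Gm F u +
        (u 0 ^ 2 + u 1 ^ 2) * (u 0 * dG F 2 u - u 2 * dG F 0 u))
     ((u 0 ^ 2 + u 1 ^ 2) * (2 * Gm F u + u 1 * dG F 0 u - u 0 * dG F 1 u))

/-- The k-cusped hypocycloid. -/
def hypocycloid (k : ℕ) : Set (ℝ × ℝ) :=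
  {p | ∃ θ : ℝ, p = (((k : ℝ) - 1) * Real.cos θ + Real.cos (((k : ℝ) - 1) * θ),
                      ((k : ℝ) - 1) * Real.sin θ - Real.sin (((k : ℝ) - 1) * θ))}

namespace AuxAngular

lemma e3_normsq (u : E3) : ‖u‖ ^ 2 = u 0 ^ 2 + u 1 ^ 2 + u 2 ^ 2 := by
  rw [EuclideanSpace.norm_eq, Real.sq_sqrt (by positivity)]
  simp [Fin.sum_univ_three, sq_abs]

section Alg
variable {a b c n : ℝ}

lemma algQN (hd : c < n) (hsq : n^2 = a^2+b^2+c^2) :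
    (a/(n-c))^2+(b/(n-c))^2+1 = 2*n/(n-c) := by
  have hd' : n - c ≠ 0 := sub_ne_zero.mpr hd.ne'
  field_simp
  linear_combination (-1) * hsq

lemma algN1 (hn : 0 < n) (hd : c < n) (hsq : n^2 = a^2+b^2+c^2) :
    2*(a/(n-c)) / ((a/(n-c))^2+(b/(n-c))^2+1) = n⁻¹ * a := by
  rw [algQN hd hsq]
  have hd' : n - c ≠ 0 := sub_ne_zero.mpr hd.ne'
  field_simp

lemma algN2 (hn : 0 < n) (hd : c < n) (hsq : n^2 = a^2+b^2+c^2) :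
    2*(b/(n-c)) / ((a/(n-c))^2+(b/(n-c))^2+1) = n⁻¹ * b := by
  rw [algQN hd hsq]
  have hd' : n - c ≠ 0 := sub_ne_zero.mpr hd.ne'
  field_simp

lemma algN3 (hn : 0 < n) (hd : c < n) (hsq : n^2 = a^2+b^2+c^2) :
    ((a/(n-c))^2+(b/(n-c))^2-1) / ((a/(n-c))^2+(b/(n-c))^2+1) = n⁻¹ * c := by
  rw [algQN hd hsq]
  have hd' : n - c ≠ 0 := sub_ne_zero.mpr hd.ne'
  field_simp
  linear_combination (-1) * hsq

lemma algQS (hd : -n < c) (hsq : n^2 = a^2+b^2+c^2) :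
    (a/(n+c))^2+(-b/(n+c))^2+1 = 2*n/(n+c) := by
  have hd' : n + c ≠ 0 := by intro h0; rw [show c = -n by linarith] at hd; linarith
  field_simp
  linear_combination (-1) * hsq

lemma algS1 (hn : 0 < n) (hd : -n < c) (hsq : n^2 = a^2+b^2+c^2) :
    2*(a/(n+c)) / ((a/(n+c))^2+(-b/(n+c))^2+1) = n⁻¹ * a := by
  have hd' : n + c ≠ 0 := by intro h0; rw [show c = -n by linarith] at hd; linarith
  have h2n : 2*n/(n+c) ≠ 0 := div_ne_zero (by positivity) hd'
  rw [algQS hd hsq, div_eq_iff h2n]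
  field_simp

lemma algS2 (hn : 0 < n) (hd : -n < c) (hsq : n^2 = a^2+b^2+c^2) :
    -(2*(-b/(n+c))) / ((a/(n+c))^2+(-b/(n+c))^2+1) = n⁻¹ * b := by
  have hd' : n + c ≠ 0 := by intro h0; rw [show c = -n by linarith] at hd; linarith
  have h2n : 2*n/(n+c) ≠ 0 := div_ne_zero (by positivity) hd'
  rw [algQS hd hsq, div_eq_iff h2n]
  field_simp

lemma algS3 (hn : 0 < n) (hd : -n < c) (hsq : n^2 = a^2+b^2+c^2) :
    (1 - ((a/(n+c))^2+(-b/(n+c))^2)) / ((a/(n+c))^2+(-b/(n+c))^2+1) = n⁻¹ * c := by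
  have hd' : n + c ≠ 0 := by intro h0; rw [show c = -n by linarith] at hd; linarith
  have h2n : 2*n/(n+c) ≠ 0 := div_ne_zero (by positivity) hd'
  rw [algQS hd hsq, div_eq_iff h2n]
  field_simp
  linear_combination hsq

end Alg

def piN (u : E3) : E2 :=
  (u 0 / (‖u‖ - u 2)) • EuclideanSpace.single 0 (1:ℝ) +
  (u 1 / (‖u‖ - u 2)) • EuclideanSpace.single 1 (1:ℝ)

def piS (u : E3) : E2 :=
  (u 0 / (‖u‖ + u 2)) • EuclideanSpace.single 0 (1:ℝ) +
  (-(u 1) / (‖u‖ + u 2)) • EuclideanSpace.single 1 (1:ℝ)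

lemma piN_0 (u : E3) : piN u 0 = u 0 / (‖u‖ - u 2) := by
  simp [piN, EuclideanSpace.single_apply]
lemma piN_1 (u : E3) : piN u 1 = u 1 / (‖u‖ - u 2) := by
  simp [piN, EuclideanSpace.single_apply]
lemma piS_0 (u : E3) : piS u 0 = u 0 / (‖u‖ + u 2) := by
  simp [piS, EuclideanSpace.single_apply]
lemma piS_1 (u : E3) : piS u 1 = -(u 1) / (‖u‖ + u 2) := by
  simp [piS, EuclideanSpace.single_apply]

lemma norm_pos_N {u : E3} (h : u 2 < ‖u‖) : 0 < ‖u‖ := by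
  rcases eq_or_ne u 0 with rfl | hu
  · norm_num at h
  · exact norm_pos_iff.mpr hu

lemma norm_pos_S {u : E3} (h : -‖u‖ < u 2) : 0 < ‖u‖ := by
  rcases eq_or_ne u 0 with rfl | hu
  · norm_num at h
  · exact norm_pos_iff.mpr hu

lemma smul_pt (u : E3) (r : ℝ) : r • u = pt (r * u 0) (r * u 1) (r * u 2) := by
  ext i
  fin_cases i <;> simp [pt]

lemma sigmaN_piN {u : E3} (h : u 2 < ‖u‖) : sigmaN (piN u) = ‖u‖⁻¹ • u := by
  have hn : 0 < ‖u‖ := norm_pos_N h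
  have hsq := e3_normsq u
  rw [smul_pt, sigmaN, piN_0, piN_1,
    algN1 hn h hsq, algN2 hn h hsq, algN3 hn h hsq]

lemma sigmaS_piS {u : E3} (h : -‖u‖ < u 2) : sigmaS (piS u) = ‖u‖⁻¹ • u := by
  have hn : 0 < ‖u‖ := norm_pos_S h
  have hsq := e3_normsq u
  rw [smul_pt, sigmaS, piS_0, piS_1,
    algS1 hn h hsq, algS2 hn h hsq, algS3 hn h hsq]

lemma GmN (F : E3 → ℝ) {u : E3} (h : u 2 < ‖u‖) :
    Gm F u = ((F ∘ sigmaN) (piN u)) ^ 2 := by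
  rw [Gm, Function.comp_apply, sigmaN_piN h]

lemma GmS (F : E3 → ℝ) {u : E3} (h : -‖u‖ < u 2) :
    Gm F u = ((F ∘ sigmaS) (piS u)) ^ 2 := by
  rw [Gm, Function.comp_apply, sigmaS_piS h]

lemma cont_coord (i : Fin 3) : Continuous fun v : E3 => v i :=
  (EuclideanSpace.proj i : E3 →L[ℝ] ℝ).continuous

lemma openN : IsOpen {u : E3 | u 2 < ‖u‖} :=
  isOpen_lt (cont_coord 2) continuous_norm

lemma openS : IsOpen {u : E3 | -‖u‖ < u 2} :=
  isOpen_lt continuous_norm.neg (cont_coord 2)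

lemma diff_coord (i : Fin 3) (u : E3) : DifferentiableAt ℝ (fun v : E3 => v i) u :=
  (EuclideanSpace.proj i : E3 →L[ℝ] ℝ).differentiableAt

lemma diff_piN {u : E3} (h : u 2 < ‖u‖) : DifferentiableAt ℝ piN u := by
  have hn : u ≠ 0 := by
    intro h0; rw [h0] at h; norm_num at h
  have hden : DifferentiableAt ℝ (fun v : E3 => ‖v‖ - v 2) u :=
    (differentiableAt_id.norm ℝ hn).sub (diff_coord 2 u)
  have hden0 : ‖u‖ - u 2 ≠ 0 := sub_ne_zero.mpr h.ne'
  have hinv : DifferentiableAt ℝ (fun v : E3 => (‖v‖ - v 2)⁻¹) u := hden.inv hden0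
  have h0 : DifferentiableAt ℝ (fun v : E3 => v 0 / (‖v‖ - v 2)) u := by
    simp only [div_eq_mul_inv]
    exact (diff_coord 0 u).mul hinv
  have h1 : DifferentiableAt ℝ (fun v : E3 => v 1 / (‖v‖ - v 2)) u := by
    simp only [div_eq_mul_inv]
    exact (diff_coord 1 u).mul hinv
  exact (h0.smul_const _).add (h1.smul_const _)

lemma cont_piS {u : E3} (h : -‖u‖ < u 2) : ContinuousAt piS u := by
  have hden0 : ‖u‖ + u 2 ≠ 0 := by
    have := norm_pos_S h; intro h0; rw [show u 2 = -‖u‖ by linarith] at h; linarith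
  have hden : ContinuousAt (fun v : E3 => ‖v‖ + v 2) u :=
    (continuous_norm.continuousAt).add (cont_coord 2).continuousAt
  have hinv : ContinuousAt (fun v : E3 => (‖v‖ + v 2)⁻¹) u := hden.inv₀ hden0
  have h0 : ContinuousAt (fun v : E3 => v 0 / (‖v‖ + v 2)) u := by
    simp only [div_eq_mul_inv]
    exact (cont_coord 0).continuousAt.mul hinv
  have h1 : ContinuousAt (fun v : E3 => -(v 1) / (‖v‖ + v 2)) u := by
    simp only [div_eq_mul_inv]
    exact (cont_coord 1).continuousAt.neg.mul hinv
  exact (h0.smul continuousAt_const).add (h1.smul continuousAt_const)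

lemma Gm_diffAt {F : E3 → ℝ} (hF : ContDiff ℝ (⊤ : ℕ∞) (F ∘ sigmaN)) {u : E3}
    (h : u 2 < ‖u‖) : DifferentiableAt ℝ (Gm F) u := by
  have hev : Gm F =ᶠ[𝓝 u] fun v => ((F ∘ sigmaN) (piN v)) ^ 2 :=
    eventually_of_mem (openN.mem_nhds h) (fun v hv => GmN F hv)
  rw [hev.differentiableAt_iff]
  have hd : Differentiable ℝ (F ∘ sigmaN) := hF.differentiable (by simp)
  exact ((hd _).comp u (diff_piN h)).pow 2

lemma Gm_contAt_S {F : E3 → ℝ} (hF : ContDiff ℝ (⊤ : ℕ∞) (F ∘ sigmaS)) {u : E3}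
    (h : -‖u‖ < u 2) : ContinuousAt (Gm F) u := by
  have hev : Gm F =ᶠ[𝓝 u] fun v => ((F ∘ sigmaS) (piS v)) ^ 2 :=
    eventually_of_mem (openS.mem_nhds h) (fun v hv => GmS F hv)
  have hc : ContinuousAt (fun v => ((F ∘ sigmaS) (piS v)) ^ 2) u :=
    ((hF.continuous.continuousAt).comp (cont_piS h)).pow 2
  exact hc.congr hev.symm

lemma clm_decomp (D : E3 →L[ℝ] ℝ) (u : E3) :
    D u = u 0 * D (EuclideanSpace.single 0 1) + u 1 * D (EuclideanSpace.single 1 1) +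
      u 2 * D (EuclideanSpace.single 2 1) := by
  have h : u = u 0 • EuclideanSpace.single 0 (1:ℝ) + u 1 • EuclideanSpace.single 1 (1:ℝ) +
      u 2 • EuclideanSpace.single 2 (1:ℝ) := by
    ext i
    fin_cases i <;> simp [EuclideanSpace.single_apply]
  conv_lhs => rw [h]
  simp [smul_eq_mul]

lemma theta_deriv {w : ℝ → ℂ} {θ : ℝ → ℝ} (hθc : Continuous θ)
    (hθ : ∀ t, w t = (‖w t‖ : ℂ) * Complex.exp ((θ t : ℂ) * Complex.I))
    {t₀ : ℝ} {w' : ℂ} (hw : HasDerivAt w w' t₀) (h0 : w t₀ ≠ 0) :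
    HasDerivAt θ ((w' / w t₀).im) t₀ := by
  have hwc : ContinuousAt w t₀ := hw.continuousAt
  have hq : HasDerivAt (fun t => w t / w t₀) (w' / w t₀) t₀ := hw.div_const _
  have hq1 : w t₀ / w t₀ = 1 := div_self h0
  have hrec : ContinuousAt (fun t => (w t / w t₀).re) t₀ :=
    Complex.continuous_re.continuousAt.comp (hwc.div_const _)
  have hre : ∀ᶠ t in 𝓝 t₀, 0 < (w t / w t₀).re := by
    have h1 : (0:ℝ) < (w t₀ / w t₀).re := by rw [hq1]; norm_num
    exact hrec (Ioi_mem_nhds h1)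
  have hslit : ∀ᶠ t in 𝓝 t₀, w t / w t₀ ∈ Complex.slitPlane :=
    hre.mono fun t ht => Complex.mem_slitPlane_iff.mpr (Or.inl ht)
  have hwne : ∀ᶠ t in 𝓝 t₀, w t ≠ 0 := by
    refine hre.mono fun t ht hwt => ?_
    rw [hwt, zero_div] at ht; norm_num at ht
  have hL : HasDerivAt (fun t => Complex.log (w t / w t₀)) (w' / w t₀) t₀ := by
    have := HasDerivAt.clog_real hq (by rw [hq1]; exact Complex.one_mem_slitPlane)
    rwa [hq1, div_one] at this
  have him : HasDerivAt (fun t => (Complex.log (w t / w t₀)).im) ((w' / w t₀).im) t₀ :=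
    (Complex.imCLM.hasFDerivAt.comp_hasDerivAt t₀ hL)
  set d : ℝ → ℝ := fun t => θ t - θ t₀ - (Complex.log (w t / w t₀)).im with hd
  have hd0 : d t₀ = 0 := by simp [hd, hq1, Complex.log_one]
  have hdc : ContinuousAt d t₀ := by
    have := him.continuousAt
    exact ((hθc.continuousAt.sub continuousAt_const).sub this)
  have hsmall : ∀ᶠ t in 𝓝 t₀, |d t| < 2 * Real.pi := by
    have h2pi : (0:ℝ) < 2 * Real.pi := by positivity
    have : ∀ᶠ t in 𝓝 t₀, d t ∈ Ioo (-(2*Real.pi)) (2*Real.pi) := by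
      apply hdc
      rw [hd0]
      exact Ioo_mem_nhds (by linarith) h2pi
    exact this.mono fun t ht => abs_lt.mpr ⟨ht.1, ht.2⟩
  have hint : ∀ᶠ t in 𝓝 t₀, ∃ n : ℤ, d t = n * (2 * Real.pi) := by
    filter_upwards [hslit, hwne] with t hts htw
    have habs : (‖w t‖ : ℂ) ≠ 0 := by
      simpa using (norm_ne_zero_iff.mpr htw)
    have habs0 : (‖w t₀‖ : ℂ) ≠ 0 := by
      simpa using (norm_ne_zero_iff.mpr h0)
    have hexpθ : Complex.exp ((θ t : ℂ) * Complex.I) = w t / (‖w t‖ : ℂ) := by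
      rw [eq_div_iff habs]; conv_rhs => rw [hθ t]
      ring
    have hexpθ0 : Complex.exp ((θ t₀ : ℂ) * Complex.I) = w t₀ / (‖w t₀‖ : ℂ) := by
      rw [eq_div_iff habs0]; conv_rhs => rw [hθ t₀]
      ring
    have hζ : w t / w t₀ ≠ 0 := div_ne_zero htw h0
    have hlog : Complex.exp (Complex.log (w t / w t₀)) = w t / w t₀ := Complex.exp_log hζ
    have hre' : Complex.exp (((Complex.log (w t / w t₀)).re : ℂ)) = (‖w t / w t₀‖ : ℂ) := by
      rw [Complex.log_re]
      rw [← Complex.ofReal_exp]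
      norm_cast
      exact Real.exp_log (norm_pos_iff.mpr hζ)
    have hexpim : Complex.exp (((Complex.log (w t / w t₀)).im : ℂ) * Complex.I)
        = (w t / w t₀) / (‖w t / w t₀‖ : ℂ) := by
      have hsplit : ((Complex.log (w t / w t₀)).im : ℂ) * Complex.I
          = Complex.log (w t / w t₀) - ((Complex.log (w t / w t₀)).re : ℂ) := by
        apply Complex.ext <;> simp
      rw [hsplit, Complex.exp_sub, hlog, hre']
    have hone : Complex.exp ((d t : ℂ) * Complex.I) = 1 := by
      have hsum : ((d t : ℂ)) * Complex.I = (θ t : ℂ) * Complex.I - (θ t₀ : ℂ) * Complex.I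
          - ((Complex.log (w t / w t₀)).im : ℂ) * Complex.I := by
        simp only [hd]
        push_cast
        ring
      rw [hsum, Complex.exp_sub, Complex.exp_sub, hexpθ, hexpθ0, hexpim]
      rw [norm_div]; push_cast
      field_simp
    rw [Complex.exp_eq_one_iff] at hone
    obtain ⟨n, hn⟩ := hone
    refine ⟨n, ?_⟩
    have hn' : ((d t : ℂ)) * Complex.I = ((n : ℂ) * (2 * Real.pi)) * Complex.I := by
      rw [hn]; push_cast; ring
    have : ((d t : ℂ)) = (n : ℂ) * (2 * Real.pi) := mul_right_cancel₀ Complex.I_ne_zero hn'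
    exact_mod_cast this
  have hzero : ∀ᶠ t in 𝓝 t₀, θ t = θ t₀ + (Complex.log (w t / w t₀)).im := by
    filter_upwards [hsmall, hint] with t h1 h2
    obtain ⟨n, hn⟩ := h2
    have hn0 : n = 0 := by
      by_contra hne
      have hge : (1:ℝ) ≤ |(n:ℝ)| := by
        exact_mod_cast Int.one_le_abs (by exact_mod_cast hne)
      rw [hn, abs_mul] at h1
      have h2pi : (0:ℝ) < 2 * Real.pi := by positivity
      rw [abs_of_pos h2pi] at h1
      nlinarith
    rw [hn0] at hn
    simp only [Int.cast_zero, zero_mul] at hn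
    simp only [hd] at hn
    linarith
  have hfinal : HasDerivAt (fun t => θ t₀ + (Complex.log (w t / w t₀)).im) ((w' / w t₀).im) t₀ :=
    him.const_add _
  exact hfinal.congr_of_eventuallyEq hzero

end AuxAngular


/-- Along an orbit in `O ∖ {p_S}`, with a continuous choice of argument `θ(t)` of the
first two coordinates, the quantity `(x² + y²)·G·e^{-2θ}` is constant. -/
theorem angular_quantity_constant_along_orbit
    (O : Set E3) (hO : IsRegionIn Sph O) (hsc : SimplyConnectedSpace O)
    (hpS : pS ∈ O) (hpN : pN ∈ frontierIn Sph O)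
    (F : E3 → ℝ) (hFsm : SmoothOnSphere F) (hFan : AnalyticOnSphere F O)
    (hFne : ∀ u ∈ O, F u ≠ 0) (hF0 : ∀ u ∈ frontierIn Sph O, F u = 0)
    (Φ : ℝ → E3 → E3) (hΦ : IsFlowOf (fVF F) Φ)
    (p : E3) (hp : p ∈ O) (hppS : p ≠ pS)
    (θ : ℝ → ℝ) (hθc : Continuous θ)
    (hθ : ∀ t : ℝ, (⟨Φ t p 0, Φ t p 1⟩ : ℂ) =
      (‖(⟨Φ t p 0, Φ t p 1⟩ : ℂ)‖ : ℂ) * Complex.exp ((θ t : ℂ) * Complex.I)) :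
    ∀ s t : ℝ,
      (Φ s p 0 ^ 2 + Φ s p 1 ^ 2) * Gm F (Φ s p) * Real.exp (-2 * θ s) =
      (Φ t p 0 ^ 2 + Φ t p 1 ^ 2) * Gm F (Φ t p) * Real.exp (-2 * θ t) := by
  classical
  open AuxAngular in
  obtain ⟨hO1, ⟨U, hUopen, hOeq⟩, hO3⟩ := hO
  have hOsub : O ⊆ Sph := by rw [hOeq]; exact Set.inter_subset_right
  have hpSph : p ∈ Sph := hOsub hp
  obtain ⟨hflowS, hflow0, hflowD⟩ := hΦ
  have hS : ∀ t, Φ t p ∈ Sph := fun t => hflowS p hpSph t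
  have hnorm : ∀ t, ‖Φ t p‖ = 1 := fun t => by
    have := hS t
    rwa [Sph, mem_sphere_zero_iff_norm] at this
  have hsq : ∀ t, Φ t p 0 ^ 2 + Φ t p 1 ^ 2 + Φ t p 2 ^ 2 = 1 := fun t => by
    have := AuxAngular.e3_normsq (Φ t p)
    rw [hnorm t] at this
    linarith [this]
  have hD : ∀ t, HasDerivAt (fun s => Φ s p) (fVF F (Φ t p)) t := hflowD p hpSph
  -- coordinates
  have hproj : ∀ (i : Fin 3) (t : ℝ), HasDerivAt (fun s => Φ s p i) (fVF F (Φ t p) i) t := by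
    intro i t
    have h := (EuclideanSpace.proj i : E3 →L[ℝ] ℝ).hasFDerivAt.comp_hasDerivAt t (hD t)
    exact h
  have hΦc : Continuous fun t => Φ t p :=
    continuous_iff_continuousAt.mpr fun t => (hD t).continuousAt
  -- the key set where the first two coordinates do not both vanish
  set R : ℝ → ℝ := fun t => Φ t p 0 ^ 2 + Φ t p 1 ^ 2 with hRdef
  set V : ℝ → ℝ := fun t => (Φ t p 0 ^ 2 + Φ t p 1 ^ 2) * Gm F (Φ t p) * Real.exp (-2 * θ t)
    with hVdef
  have hRc : Continuous R := by
    have h0 : Continuous fun t => Φ t p 0 := (AuxAngular.cont_coord 0).comp hΦc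
    have h1 : Continuous fun t => Φ t p 1 := (AuxAngular.cont_coord 1).comp hΦc
    exact (h0.pow 2).add (h1.pow 2)
  -- fVF coordinates
  have hf0 : ∀ u : E3, fVF F u 0 = 2 * u 2 * (u 1 - u 0) * Gm F u +
      (u 0 ^ 2 + u 1 ^ 2) * (-(u 1) * dG F 2 u + u 2 * dG F 1 u) := fun u => by simp [fVF, pt]
  have hf1 : ∀ u : E3, fVF F u 1 = -(2 * u 2 * (u 0 + u 1)) * Gm F u +
      (u 0 ^ 2 + u 1 ^ 2) * (u 0 * dG F 2 u - u 2 * dG F 0 u) := fun u => by simp [fVF, pt]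
  have hf2 : ∀ u : E3, fVF F u 2 = (u 0 ^ 2 + u 1 ^ 2) *
      (2 * Gm F u + u 1 * dG F 0 u - u 0 * dG F 1 u) := fun u => by simp [fVF, pt]
  -- derivative of Gm along the flow where r² ≠ 0
  have hcondN : ∀ t, R t ≠ 0 → Φ t p 2 < ‖Φ t p‖ := by
    intro t hRt
    rw [hnorm t]
    have h1 := hsq t
    have h2 : 0 < Φ t p 0 ^ 2 + Φ t p 1 ^ 2 := by
      rcases (lt_or_eq_of_le (by positivity : (0:ℝ) ≤ Φ t p 0 ^ 2 + Φ t p 1 ^ 2)) with h | h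
      · exact h
      · exact absurd h.symm hRt
    nlinarith [sq_nonneg (Φ t p 2), sq_nonneg (Φ t p 2 - 1), sq_nonneg (Φ t p 2 + 1)]
  have hGmD : ∀ t, R t ≠ 0 → HasDerivAt (fun s => Gm F (Φ s p))
      (fVF F (Φ t p) 0 * dG F 0 (Φ t p) + fVF F (Φ t p) 1 * dG F 1 (Φ t p) +
        fVF F (Φ t p) 2 * dG F 2 (Φ t p)) t := by
    intro t hRt
    have hdiff := AuxAngular.Gm_diffAt hFsm.1 (hcondN t hRt)
    have h := hdiff.hasFDerivAt.comp_hasDerivAt t (hD t)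
    rw [AuxAngular.clm_decomp] at h
    exact h
  -- derivative of θ where r² ≠ 0
  have hθD : ∀ t, R t ≠ 0 → HasDerivAt θ
      ((fVF F (Φ t p) 1 * Φ t p 0 - fVF F (Φ t p) 0 * Φ t p 1) /
        (Φ t p 0 ^ 2 + Φ t p 1 ^ 2)) t := by
    intro t hRt
    set w : ℝ → ℂ := fun s => (Φ s p 0 : ℂ) + (Φ s p 1 : ℂ) * Complex.I with hwdef
    have hwθ : ∀ s, w s = (‖w s‖ : ℂ) * Complex.exp ((θ s : ℂ) * Complex.I) := by
      intro s
      have := hθ s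
      rwa [Complex.mk_eq_add_mul_I] at this
    have hwD : HasDerivAt w ((fVF F (Φ t p) 0 : ℂ) + (fVF F (Φ t p) 1 : ℂ) * Complex.I) t := by
      have hx : HasDerivAt (fun s => ((Φ s p 0 : ℝ) : ℂ)) ((fVF F (Φ t p) 0 : ℂ)) t :=
        Complex.ofRealCLM.hasFDerivAt.comp_hasDerivAt t (hproj 0 t)
      have hy : HasDerivAt (fun s => ((Φ s p 1 : ℝ) : ℂ)) ((fVF F (Φ t p) 1 : ℂ)) t :=
        Complex.ofRealCLM.hasFDerivAt.comp_hasDerivAt t (hproj 1 t)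
      exact hx.add (hy.mul_const _)
    have hw0 : w t ≠ 0 := by
      intro h0
      apply hRt
      have hre : Φ t p 0 = 0 := by
        have h := congrArg Complex.re h0
        simp only [hwdef] at h
        simpa using h
      have him : Φ t p 1 = 0 := by
        have h := congrArg Complex.im h0
        simp only [hwdef] at h
        simpa using h
      simp [hRdef, hre, him]
    have h := AuxAngular.theta_deriv hθc hwθ hwD hw0
    have hval : ((((fVF F (Φ t p) 0 : ℂ) + (fVF F (Φ t p) 1 : ℂ) * Complex.I)) / w t).im
        = (fVF F (Φ t p) 1 * Φ t p 0 - fVF F (Φ t p) 0 * Φ t p 1) /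
          (Φ t p 0 ^ 2 + Φ t p 1 ^ 2) := by
      simp only [hwdef]
      rw [Complex.div_im, Complex.normSq_add_mul_I]
      simp only [Complex.add_im, Complex.add_re, Complex.ofReal_re, Complex.ofReal_im,
        Complex.mul_im, Complex.mul_re, Complex.I_re, Complex.I_im]
      ring
    rw [hval] at h
    exact h
  -- derivative of V is zero where r² ≠ 0
  have hVD : ∀ t, R t ≠ 0 → HasDerivAt V 0 t := by
    intro t hRt
    have hrD : HasDerivAt (fun s => Φ s p 0 ^ 2 + Φ s p 1 ^ 2)
        (2 * Φ t p 0 * fVF F (Φ t p) 0 + 2 * Φ t p 1 * fVF F (Φ t p) 1) t := by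
      have h0 := (hproj 0 t).pow 2
      have h1 := (hproj 1 t).pow 2
      have := h0.add h1
      exact this.congr_deriv (by ring)
    have hED : HasDerivAt (fun s => Real.exp (-2 * θ s))
        (Real.exp (-2 * θ t) * (-2 * ((fVF F (Φ t p) 1 * Φ t p 0 - fVF F (Φ t p) 0 * Φ t p 1) /
          (Φ t p 0 ^ 2 + Φ t p 1 ^ 2)))) t := by
      exact ((hθD t hRt).const_mul (-2)).exp
    have htot := (hrD.mul (hGmD t hRt)).mul hED
    have hval : (2 * Φ t p 0 * fVF F (Φ t p) 0 + 2 * Φ t p 1 * fVF F (Φ t p) 1) * Gm F (Φ t p)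
          * Real.exp (-2 * θ t)
        + (Φ t p 0 ^ 2 + Φ t p 1 ^ 2) *
          (fVF F (Φ t p) 0 * dG F 0 (Φ t p) + fVF F (Φ t p) 1 * dG F 1 (Φ t p) +
            fVF F (Φ t p) 2 * dG F 2 (Φ t p)) * Real.exp (-2 * θ t)
        + (Φ t p 0 ^ 2 + Φ t p 1 ^ 2) * Gm F (Φ t p) *
          (Real.exp (-2 * θ t) * (-2 * ((fVF F (Φ t p) 1 * Φ t p 0 - fVF F (Φ t p) 0 * Φ t p 1) /
            (Φ t p 0 ^ 2 + Φ t p 1 ^ 2)))) = 0 := by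
      rw [hf0 (Φ t p), hf1 (Φ t p), hf2 (Φ t p)]
      have hRne : Φ t p 0 ^ 2 + Φ t p 1 ^ 2 ≠ 0 := hRt
      field_simp
      ring
    have hVform : HasDerivAt V
        ((2 * Φ t p 0 * fVF F (Φ t p) 0 + 2 * Φ t p 1 * fVF F (Φ t p) 1) * Gm F (Φ t p)
          * Real.exp (-2 * θ t)
        + (Φ t p 0 ^ 2 + Φ t p 1 ^ 2) *
          (fVF F (Φ t p) 0 * dG F 0 (Φ t p) + fVF F (Φ t p) 1 * dG F 1 (Φ t p) +
            fVF F (Φ t p) 2 * dG F 2 (Φ t p)) * Real.exp (-2 * θ t)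
        + (Φ t p 0 ^ 2 + Φ t p 1 ^ 2) * Gm F (Φ t p) *
          (Real.exp (-2 * θ t) * (-2 * ((fVF F (Φ t p) 1 * Φ t p 0 - fVF F (Φ t p) 0 * Φ t p 1) /
            (Φ t p 0 ^ 2 + Φ t p 1 ^ 2))))) t := by
      exact htot.congr_deriv (by simp only [Pi.mul_apply]; ring)
    rw [hval] at hVform
    exact hVform
  -- continuity of V
  have hGmc : Continuous fun t => Gm F (Φ t p) := by
    rw [continuous_iff_continuousAt]
    intro t
    have h1 : ContinuousAt (fun s : ℝ => Φ s p) t := hΦc.continuousAt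
    rcases lt_or_ge (Φ t p 2) 1 with h | h
    · have hc : Φ t p 2 < ‖Φ t p‖ := by rw [hnorm t]; exact h
      have h2 := ContinuousAt.comp (f := fun s : ℝ => Φ s p) (g := Gm F)
        (AuxAngular.Gm_diffAt hFsm.1 hc).continuousAt h1
      exact h2
    · have hc : -‖Φ t p‖ < Φ t p 2 := by rw [hnorm t]; linarith
      have h2 := ContinuousAt.comp (f := fun s : ℝ => Φ s p) (g := Gm F)
        (AuxAngular.Gm_contAt_S hFsm.2 hc) h1
      exact h2
  have hVc : Continuous V := by
    have hec : Continuous fun t => Real.exp (-2 * θ t) :=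
      Real.continuous_exp.comp (continuous_const.mul hθc)
    exact (hRc.mul hGmc).mul hec
  -- V 0 ≠ 0
  have hΦ0 : Φ 0 p = p := hflow0 p hpSph
  have hpnorm : ‖p‖ = 1 := by
    have := hpSph; rwa [Sph, mem_sphere_zero_iff_norm] at this
  have hpN' : p ≠ pN := by
    rintro rfl
    have hmem : pN ∈ closure (Sph \ O) := hpN.2
    have hU : pN ∈ U := by
      have := hp; rw [hOeq] at this; exact this.1
    obtain ⟨q, hqU, hq⟩ := mem_closure_iff.mp hmem U hUopen hU
    rw [hOeq] at hq
    exact hq.2 ⟨hqU, hq.1⟩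
  have hR0 : R 0 ≠ 0 := by
    intro h0
    rw [hRdef] at h0
    simp only [hΦ0] at h0
    have hp0 : p 0 = 0 := by nlinarith [sq_nonneg (p 0), sq_nonneg (p 1)]
    have hp1 : p 1 = 0 := by nlinarith [sq_nonneg (p 0), sq_nonneg (p 1)]
    have hp2 : p 0 ^ 2 + p 1 ^ 2 + p 2 ^ 2 = 1 := by
      have := AuxAngular.e3_normsq p
      rw [hpnorm] at this; linarith
    have hcases : p 2 = 1 ∨ p 2 = -1 := by
      have : (p 2 - 1) * (p 2 + 1) = 0 := by nlinarith
      rcases mul_eq_zero.mp this with h | h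
      · left; linarith
      · right; linarith
    rcases hcases with h | h
    · apply hpN'
      ext i
      fin_cases i
      · exact hp0
      · exact hp1
      · exact h
    · apply hppS
      ext i
      fin_cases i
      · exact hp0
      · exact hp1
      · exact h
  have hV0 : V 0 ≠ 0 := by
    have hGmp : Gm F (Φ 0 p) ≠ 0 := by
      rw [hΦ0, Gm, hpnorm, inv_one, one_smul]
      exact pow_ne_zero 2 (hFne p hp)
    have : V 0 = R 0 * Gm F (Φ 0 p) * Real.exp (-2 * θ 0) := rfl
    rw [this]
    exact mul_ne_zero (mul_ne_zero hR0 hGmp) (Real.exp_ne_zero _)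
  -- R never vanishes
  have hRall : ∀ t, R t ≠ 0 := by
    by_contra hcon
    push_neg at hcon
    obtain ⟨t₁, ht₁⟩ := hcon
    have ht₁0 : t₁ ≠ 0 := fun h => hR0 (h ▸ ht₁)
    rcases lt_or_gt_of_ne ht₁0 with hneg | hpos
    · -- t₁ < 0 : use time reversal
      set W : ℝ → ℝ := fun s => V (-s) with hWdef
      set K : Set ℝ := {s | R (-s) = 0} ∩ Icc 0 (-t₁) with hKdef
      have hKc : IsClosed K := by
        apply IsClosed.inter _ isClosed_Icc
        exact isClosed_eq (hRc.comp continuous_neg) continuous_const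
      have hKne : K.Nonempty := ⟨-t₁, by simpa using ht₁, by constructor <;> [linarith; linarith]⟩
      have hKbdd : BddBelow K := ⟨0, fun s hs => hs.2.1⟩
      set b := sInf K with hbdef
      have hbK : b ∈ K := hKc.csInf_mem hKne hKbdd
      have hb0 : 0 < b := by
        rcases lt_or_eq_of_le hbK.2.1 with h | h
        · exact h
        · exfalso; apply hR0; have : R (-b) = 0 := hbK.1; rwa [← h, neg_zero] at this
      have hlt : ∀ s ∈ Ico (0:ℝ) b, R (-s) ≠ 0 := by
        intro s hs hRs
        have hsK : s ∈ K := ⟨hRs, hs.1, by linarith [hbK.2.2, hs.2]⟩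
        exact absurd (csInf_le hKbdd hsK) (not_le.mpr hs.2)
      have hWc : ContinuousOn W (Icc 0 b) := (hVc.comp continuous_neg).continuousOn
      have hWd : ∀ s ∈ Ico (0:ℝ) b, HasDerivWithinAt W 0 (Ici s) s := by
        intro s hs
        have h := (hVD (-s) (hlt s hs)).comp s (hasDerivAt_neg s)
        rw [zero_mul] at h; exact h.hasDerivWithinAt
      have hconst := constant_of_has_deriv_right_zero hWc hWd b (right_mem_Icc.mpr hb0.le)
      have hWb : W b = 0 := by
        have hRb : R (-b) = 0 := hbK.1
        show V (-b) = 0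
        have : V (-b) = R (-b) * Gm F (Φ (-b) p) * Real.exp (-2 * θ (-b)) := rfl
        rw [this, hRb, zero_mul, zero_mul]
      have hW0 : W 0 = V 0 := by show V (-0) = V 0; rw [neg_zero]
      rw [hWb, hW0] at hconst
      exact hV0 hconst.symm
    · -- t₁ > 0
      set K : Set ℝ := {s | R s = 0} ∩ Icc 0 t₁ with hKdef
      have hKc : IsClosed K := by
        apply IsClosed.inter _ isClosed_Icc
        exact isClosed_eq hRc continuous_const
      have hKne : K.Nonempty := ⟨t₁, ht₁, by constructor <;> [linarith; linarith]⟩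
      have hKbdd : BddBelow K := ⟨0, fun s hs => hs.2.1⟩
      set b := sInf K with hbdef
      have hbK : b ∈ K := hKc.csInf_mem hKne hKbdd
      have hb0 : 0 < b := by
        rcases lt_or_eq_of_le hbK.2.1 with h | h
        · exact h
        · exact absurd (h ▸ hbK.1) hR0
      have hlt : ∀ s ∈ Ico (0:ℝ) b, R s ≠ 0 := by
        intro s hs hRs
        have hsK : s ∈ K := ⟨hRs, hs.1, by linarith [hbK.2.2, hs.2]⟩
        exact absurd (csInf_le hKbdd hsK) (not_le.mpr hs.2)
      have hVd' : ∀ s ∈ Ico (0:ℝ) b, HasDerivWithinAt V 0 (Ici s) s := fun s hs =>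
        (hVD s (hlt s hs)).hasDerivWithinAt
      have hconst := constant_of_has_deriv_right_zero (hVc.continuousOn) hVd' b
        (right_mem_Icc.mpr hb0.le)
      have hVb : V b = 0 := by
        have hRb : R b = 0 := hbK.1
        have : V b = R b * Gm F (Φ b p) * Real.exp (-2 * θ b) := rfl
        rw [this, hRb, zero_mul, zero_mul]
      rw [hVb] at hconst
      exact hV0 hconst.symm
  -- conclude
  have hdiff : Differentiable ℝ V := fun t => (hVD t (hRall t)).differentiableAt
  have hderiv0 : ∀ t, deriv V t = 0 := fun t => (hVD t (hRall t)).deriv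
  intro s t
  exact is_const_of_deriv_eq_zero hdiff hderiv0 s t
end
end

section
/- In the setting below, the south pole p_S is a repelling focus for Φ: in particular, there is a neighborhood V of p_S in 𝕊² such that α_Φ(q) = {p_S} for every q ∈ V, where α_Φ(q) is the set of accumulation points of Φ(t,q) as t → −∞. -/
noncomputable section

open Filter Topology Set

lemma mono_from_deriv {h h' : ℝ → ℝ} (hd : ∀ t, HasDerivAt h (h' t) t)
    {a b : ℝ} (hab : a ≤ b) (hnn : ∀ t, a < t → t < b → 0 ≤ h' t) : h a ≤ h b := by
  have hcont : ContinuousOn h (Icc a b) := fun t _ => (hd t).continuousAt.continuousWithinAt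
  have hmono := monotoneOn_of_deriv_nonneg (convex_Icc a b) hcont
    (fun t ht => ((hd t).differentiableAt.differentiableWithinAt))
    (fun t ht => by
      rw [interior_Icc] at ht
      rw [(hd t).deriv]
      exact hnn t ht.1 ht.2)
  exact hmono (left_mem_Icc.mpr hab) (right_mem_Icc.mpr hab) hab

/-- Backward invariance of sublevel sets. -/
lemma backward_bound {h h' : ℝ → ℝ} (hd : ∀ t, HasDerivAt h (h' t) t)
    {c : ℝ} (hc : h 0 < c) (hmono : ∀ t, t ≤ 0 → h t ≤ c → 0 ≤ h' t) :
    ∀ t, t ≤ 0 → h t ≤ h 0 := by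
  have hcont : Continuous h := continuous_iff_continuousAt.mpr fun t => (hd t).continuousAt
  intro t ht
  by_contra hcon
  push_neg at hcon
  set b := min c (h t) with hb
  have hbh : h 0 < b := lt_min hc hcon
  set A := Icc t 0 ∩ {τ | b ≤ h τ} with hA
  have hAne : A.Nonempty := ⟨t, left_mem_Icc.mpr ht, show b ≤ h t from min_le_right _ _⟩
  have hAcomp : IsCompact A := isCompact_Icc.inter_right (isClosed_le continuous_const hcont)
  set τ1 := sSup A with hτ1
  have hτ1A : τ1 ∈ A := hAcomp.sSup_mem hAne
  have hτ1lt : τ1 < 0 := by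
    rcases lt_or_eq_of_le hτ1A.1.2 with h | h
    · exact h
    · exfalso; have := hτ1A.2; rw [h] at this; exact absurd this (not_le.mpr hbh)
  have hlt : ∀ τ, τ1 < τ → τ ≤ 0 → h τ < b := by
    intro τ hτ1τ hτ0
    by_contra hcc
    push_neg at hcc
    have hτA : τ ∈ A := ⟨⟨hτ1A.1.1.trans hτ1τ.le, hτ0⟩, hcc⟩
    exact absurd (le_csSup hAcomp.bddAbove hτA) (not_le.mpr hτ1τ)
  have hle : h τ1 ≤ h 0 := by
    apply mono_from_deriv hd hτ1lt.le
    intro τ hτa hτb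
    exact hmono τ hτb.le (le_of_lt (lt_of_lt_of_le (hlt τ hτa hτb.le) (min_le_left _ _)))
  exact absurd (lt_of_lt_of_le hbh (hτ1A.2.trans hle)) (lt_irrefl _)

/-- Linear decay bound. -/
lemma linear_bound {h h' : ℝ → ℝ} (hd : ∀ t, HasDerivAt h (h' t) t)
    {κ : ℝ} (hk : ∀ t, t ≤ 0 → κ ≤ h' t) : ∀ t, t ≤ 0 → h t ≤ h 0 + κ * t := by
  intro t ht
  have hg : ∀ s, HasDerivAt (fun τ => h τ - κ * τ) (h' s - κ) s := by
    intro s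
    have : HasDerivAt (fun τ : ℝ => κ * τ) (κ * 1) s := (hasDerivAt_id s).const_mul κ
    have := (hd s).sub this; rw [mul_one] at this; exact this
  have := mono_from_deriv hg ht (fun τ hτa hτb => sub_nonneg.mpr (hk τ hτb.le))
  simp at this
  linarith

def projN (v : E3) : E2 :=
  (PiLp.continuousLinearEquiv 2 ℝ (fun _ : Fin 2 => ℝ)).symm ![v 0 / (1 - v 2), v 1 / (1 - v 2)]

lemma projN_apply0 (v : E3) : projN v 0 = v 0 / (1 - v 2) := rfl
lemma projN_apply1 (v : E3) : projN v 1 = v 1 / (1 - v 2) := rfl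
lemma pt_apply0 (a b c : ℝ) : pt a b c 0 = a := rfl
lemma pt_apply1 (a b c : ℝ) : pt a b c 1 = b := rfl
lemma pt_apply2 (a b c : ℝ) : pt a b c 2 = c := rfl
lemma pS_apply0 : pS 0 = 0 := rfl
lemma pS_apply1 : pS 1 = 0 := rfl
lemma pS_apply2 : pS 2 = -1 := rfl

lemma norm_pS : ‖pS‖ = 1 := by
  simp [pS, pt, EuclideanSpace.norm_eq, Fin.sum_univ_three]

lemma pS_mem_Sph : pS ∈ Sph := by
  simp [Sph, mem_sphere_iff_norm, norm_pS]

lemma sum_sq_of_norm_one {v : E3} (h : ‖v‖ = 1) : v 0 ^ 2 + v 1 ^ 2 + v 2 ^ 2 = 1 := by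
  rw [EuclideanSpace.norm_eq, Fin.sum_univ_three] at h
  have h0 : (0:ℝ) ≤ ‖v 0‖ ^ 2 + ‖v 1‖ ^ 2 + ‖v 2‖ ^ 2 := by positivity
  have := Real.sq_sqrt h0
  rw [h] at this
  simp only [Real.norm_eq_abs, sq_abs] at this
  linarith

lemma sph_sum {u : E3} (hu : u ∈ Sph) : u 0 ^ 2 + u 1 ^ 2 + u 2 ^ 2 = 1 := by
  apply sum_sq_of_norm_one
  simpa [Sph, mem_sphere_iff_norm] using hu

lemma coord_dist (u v : E3) (i : Fin 3) : |u i - v i| ≤ dist u v := by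
  rw [EuclideanSpace.dist_eq, ← Real.sqrt_sq_eq_abs]
  apply Real.sqrt_le_sqrt
  calc (u i - v i)^2 = dist (u i) (v i) ^ 2 := by rw [Real.dist_eq, sq_abs]
    _ ≤ ∑ j, dist (u j) (v j) ^ 2 :=
        Finset.single_le_sum (f := fun j => dist (u j) (v j)^2)
          (fun j _ => sq_nonneg _) (Finset.mem_univ i)

lemma sigmaN_projN {v : E3} (hv : v 0 ^ 2 + v 1 ^ 2 + v 2 ^ 2 = 1) (h2 : v 2 ≠ 1) :
    sigmaN (projN v) = v := by
  have hs : (1 : ℝ) - v 2 ≠ 0 := sub_ne_zero.mpr (Ne.symm h2)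
  have hden : projN v 0 ^ 2 + projN v 1 ^ 2 + 1 = 2 / (1 - v 2) := by
    rw [projN_apply0, projN_apply1]
    field_simp
    linear_combination hv
  have h2d : (2 : ℝ) / (1 - v 2) ≠ 0 := div_ne_zero two_ne_zero hs
  have hco : ∀ i : Fin 3, sigmaN (projN v) i = v i := by
    intro i
    fin_cases i
    · show sigmaN (projN v) 0 = v 0
      rw [sigmaN, pt_apply0, hden, projN_apply0]
      field_simp
    · show sigmaN (projN v) 1 = v 1
      rw [sigmaN, pt_apply1, hden, projN_apply1]
      field_simp
    · show sigmaN (projN v) 2 = v 2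
      rw [sigmaN, pt_apply2, hden, projN_apply0, projN_apply1]
      field_simp
      linear_combination hv
  ext i
  exact hco i

lemma contDiffAt_Gm (F : E3 → ℝ) (hF : ContDiff ℝ (⊤ : ℕ∞) (F ∘ sigmaN)) :
    ContDiffAt ℝ (⊤ : ℕ∞) (Gm F) pS := by
  have hpS0 : pS ≠ 0 := by
    intro h; have := norm_pS; rw [h] at this; simp at this
  have hnorm : ContDiffAt ℝ (⊤ : ℕ∞) (fun u : E3 => ‖u‖) pS := contDiffAt_norm ℝ hpS0
  have hn : ContDiffAt ℝ (⊤ : ℕ∞) (fun u : E3 => ‖u‖⁻¹ • u) pS :=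
    (hnorm.inv (by rw [norm_pS]; norm_num)).smul contDiffAt_id
  have hnpS : (fun u : E3 => ‖u‖⁻¹ • u) pS = pS := by simp [norm_pS]
  have hproj : ∀ i : Fin 3, ContDiffAt ℝ (⊤ : ℕ∞) (fun v : E3 => v i) pS := fun i =>
    (EuclideanSpace.proj (𝕜 := ℝ) i).contDiff.contDiffAt
  have hprojN : ContDiffAt ℝ (⊤ : ℕ∞) projN pS := by
    apply ((PiLp.continuousLinearEquiv 2 ℝ (fun _ : Fin 2 => ℝ)).symm.contDiff.contDiffAt).comp
    rw [contDiffAt_pi]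
    intro i
    fin_cases i
    · exact (hproj 0).div ((contDiffAt_const (c := (1:ℝ))).sub (hproj 2))
        (by rw [pS_apply2]; norm_num)
    · exact (hproj 1).div ((contDiffAt_const (c := (1:ℝ))).sub (hproj 2))
        (by rw [pS_apply2]; norm_num)
  have hmodel : ContDiffAt ℝ (⊤ : ℕ∞)
      (fun u : E3 => ((F ∘ sigmaN) (projN (‖u‖⁻¹ • u)))^2) pS := by
    have h1 : ContDiffAt ℝ (⊤ : ℕ∞) (fun u : E3 => (F ∘ sigmaN) (projN (‖u‖⁻¹ • u))) pS := by
      apply hF.contDiffAt.comp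
      have hprojN' : ContDiffAt ℝ (⊤ : ℕ∞) projN ((fun u : E3 => ‖u‖⁻¹ • u) pS) := by
        rw [hnpS]; exact hprojN
      exact ContDiffAt.comp (g := projN) (f := fun u : E3 => ‖u‖⁻¹ • u) pS hprojN' hn
    exact h1.pow 2
  apply hmodel.congr_of_eventuallyEq
  have hball : Metric.ball pS (1/2) ∈ 𝓝 pS := Metric.ball_mem_nhds _ (by norm_num)
  filter_upwards [hball] with u hu
  have hd : dist u pS < 1/2 := Metric.mem_ball.mp hu
  have hu2 : u 2 < -1/2 := by
    have h1 := coord_dist u pS 2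
    rw [pS_apply2] at h1
    have h3 := abs_lt.mp (lt_of_le_of_lt h1 hd)
    linarith [h3.2]
  have hun : ‖u‖ ≥ 1/2 := by
    have h1 := norm_pS
    have h2 := abs_norm_sub_norm_le u pS
    rw [← dist_eq_norm] at h2
    have h3 := abs_le.mp (h2.trans hd.le)
    linarith [h3.1]
  have hu0 : u ≠ 0 := by intro h; rw [h] at hun; simp at hun; linarith
  set v := ‖u‖⁻¹ • u with hv
  have hvn : ‖v‖ = 1 := by
    rw [hv, norm_smul, norm_inv, norm_norm, inv_mul_cancel₀ (norm_ne_zero_iff.mpr hu0)]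
  have hv2 : v 2 ≠ 1 := by
    have he : v 2 = ‖u‖⁻¹ * u 2 := rfl
    rw [he]
    have hpos : (0:ℝ) < ‖u‖⁻¹ := by positivity
    nlinarith
  show Gm F u = ((F ∘ sigmaN) (projN v))^2
  simp only [Function.comp]
  rw [sigmaN_projN (sum_sq_of_norm_one hvn) hv2]
  rfl

def psi (F : E3 → ℝ) (u : E3) : ℝ :=
  2 * Gm F u + u 1 * dG F 0 u - u 0 * dG F 1 u

lemma fVF_apply2 (F : E3 → ℝ) (u : E3) :
    fVF F u 2 = (u 0 ^ 2 + u 1 ^ 2) * psi F u := rfl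

lemma psi_pS (F : E3 → ℝ) : psi F pS = 2 * F pS ^ 2 := by
  have hGm : Gm F pS = F pS ^ 2 := by
    rw [Gm, norm_pS]; norm_num
  rw [psi, hGm, pS_apply0, pS_apply1]
  ring

lemma continuousAt_psi (F : E3 → ℝ) (hF : ContDiff ℝ (⊤ : ℕ∞) (F ∘ sigmaN)) :
    ContinuousAt (psi F) pS := by
  have hG := contDiffAt_Gm F hF
  have hGc : ContinuousAt (Gm F) pS := hG.continuousAt
  have hfd : ContDiffAt ℝ 0 (fderiv ℝ (Gm F)) pS := hG.fderiv_right (by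
    exact_mod_cast le_top)
  have hfdc : ContinuousAt (fderiv ℝ (Gm F)) pS := hfd.continuousAt
  have hdG : ∀ i : Fin 3, ContinuousAt (dG F i) pS := by
    intro i
    have happ : Continuous fun L : E3 →L[ℝ] ℝ => L (EuclideanSpace.single i 1) :=
      (ContinuousLinearMap.apply ℝ ℝ (EuclideanSpace.single i 1)).continuous
    exact happ.continuousAt.comp hfdc
  have hcoord : ∀ i : Fin 3, ContinuousAt (fun u : E3 => u i) pS := fun i =>
    (EuclideanSpace.proj (𝕜 := ℝ) i).continuous.continuousAt
  exact ((continuousAt_const.mul hGc).add ((hcoord 1).mul (hdG 0))).sub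
    ((hcoord 0).mul (hdG 1))

lemma dist_pS_sq {u : E3} (hu : u ∈ Sph) : dist u pS = Real.sqrt (2 + 2 * u 2) := by
  have hs := sph_sum hu
  rw [EuclideanSpace.dist_eq, Fin.sum_univ_three]
  congr 1
  rw [Real.dist_eq, Real.dist_eq, Real.dist_eq, sq_abs, sq_abs, sq_abs,
    pS_apply0, pS_apply1, pS_apply2]
  ring_nf
  linarith

set_option maxHeartbeats 1000000 in
theorem south_pole_aux
    (F : E3 → ℝ) (hFsm : ContDiff ℝ (⊤ : ℕ∞) (F ∘ sigmaN))
    (hFne : F pS ≠ 0)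
    (Φ : ℝ → E3 → E3) (hΦ : IsFlowOf (fVF F) Φ) :
    ∃ V : Set E3, V ⊆ Sph ∧ V ∈ 𝓝[Sph] pS ∧
      ∀ q ∈ V, alphaLimitSet Φ q = {pS} := by
  obtain ⟨hinv, hzero, hderiv⟩ := hΦ
  set κ : ℝ := F pS ^ 2 with hκ
  have hκpos : 0 < κ := by positivity
  -- find δ
  have hpsiS : psi F pS = 2 * κ := psi_pS F
  have hev : {u : E3 | κ < psi F u} ∈ 𝓝 pS := by
    have := (continuousAt_psi F hFsm).preimage_mem_nhds (Ioi_mem_nhds (show κ < psi F pS by rw [hpsiS]; linarith))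
    exact this
  obtain ⟨δ, hδpos, hδball⟩ := Metric.mem_nhds_iff.mp hev
  set ε : ℝ := min (δ^2/4) (1/2) with hε
  have hεpos : 0 < ε := lt_min (by positivity) (by norm_num)
  have hεle : ε ≤ 1/2 := min_le_right _ _
  -- the key vector field estimate
  have hfield : ∀ u ∈ Sph, u 2 ≤ -1 + ε → κ * (1 - u 2 ^ 2) ≤ fVF F u 2 := by
    intro u hu hu2
    have hsum := sph_sum hu
    have hball : u ∈ Metric.ball pS δ := by
      rw [Metric.mem_ball, dist_pS_sq hu]
      have h1 : 2 + 2 * u 2 ≤ 2 * ε := by linarith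
      have h2 : 2 * ε ≤ δ^2/2 := by
        have := min_le_left (δ^2/4) (1/2); simp only [← hε] at this; linarith
      have h3 : 2 + 2 * u 2 < δ ^ 2 := by nlinarith
      calc Real.sqrt (2 + 2 * u 2) < Real.sqrt (δ^2) := by
            apply Real.sqrt_lt_sqrt ?_ h3
            nlinarith [sq_nonneg (u 2 + 1), sq_nonneg (u 0), sq_nonneg (u 1)]
        _ = δ := Real.sqrt_sq hδpos.le
    have hψ : κ < psi F u := hδball hball
    rw [fVF_apply2]
    have h01 : u 0 ^ 2 + u 1 ^ 2 = 1 - u 2 ^ 2 := by linarith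
    rw [h01]
    have hnn : 0 ≤ 1 - u 2 ^ 2 := by nlinarith [sq_nonneg (u 0), sq_nonneg (u 1)]
    nlinarith
  have hfield0 : ∀ u ∈ Sph, u 2 ≤ -1 + ε → 0 ≤ fVF F u 2 := by
    intro u hu hu2
    have h1 := hfield u hu hu2
    have hsum := sph_sum hu
    have hnn : 0 ≤ 1 - u 2 ^ 2 := by nlinarith [sq_nonneg (u 0), sq_nonneg (u 1)]
    nlinarith
  -- the neighbourhood V
  refine ⟨{u | u 2 < -1 + ε} ∩ Sph, inter_subset_right, ?_, ?_⟩
  · rw [mem_nhdsWithin]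
    refine ⟨{u : E3 | u 2 < -1 + ε}, ?_, ?_, fun u hu => hu⟩
    · have : IsOpen ((EuclideanSpace.proj (𝕜 := ℝ) (2 : Fin 3)) ⁻¹' (Iio (-1 + ε))) :=
        (EuclideanSpace.proj (𝕜 := ℝ) (2 : Fin 3)).continuous.isOpen_preimage _ isOpen_Iio
      exact this
    · show pS 2 < -1 + ε
      rw [pS_apply2]; linarith
  intro q hq
  obtain ⟨hq2, hqS⟩ := hq
  have hq2 : q 2 < -1 + ε := hq2
  -- the scalar function h
  set h : ℝ → ℝ := fun t => Φ t q 2 with hh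
  set h' : ℝ → ℝ := fun t => fVF F (Φ t q) 2 with hh'
  have hd : ∀ t, HasDerivAt h (h' t) t := by
    intro t
    have := (EuclideanSpace.proj (𝕜 := ℝ) (2 : Fin 3)).hasFDerivAt.comp_hasDerivAt t
      (hderiv q hqS t)
    exact this
  have horb : ∀ t, Φ t q ∈ Sph := hinv q hqS
  have hbnd : ∀ t, -1 ≤ h t ∧ h t ≤ 1 := by
    intro t
    have := sph_sum (horb t)
    constructor <;> nlinarith [sq_nonneg (Φ t q 0), sq_nonneg (Φ t q 1),
      sq_nonneg (Φ t q 2 - 1), sq_nonneg (Φ t q 2 + 1)]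
  have hq0 : h 0 < -1 + ε := by
    show Φ 0 q 2 < -1 + ε
    rw [hzero q hqS]; exact hq2
  -- backward invariance
  have hA : ∀ t, t ≤ 0 → h t ≤ h 0 :=
    backward_bound hd hq0
      (fun t ht hle => hfield0 _ (horb t) hle)
  have hIn : ∀ t, t ≤ 0 → h t ≤ -1 + ε := fun t ht => (hA t ht).trans hq0.le
  have hmono2 : ∀ s t : ℝ, t ≤ s → s ≤ 0 → h t ≤ h s := by
    intro s t hts hs0
    exact mono_from_deriv hd hts
      (fun τ hτa hτb => hfield0 _ (horb τ) (hIn τ (hτb.le.trans hs0)))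
  -- convergence of h to -1
  have hC : Tendsto h atBot (𝓝 (-1)) := by
    rw [tendsto_order]
    constructor
    · intro c hc
      filter_upwards with t
      exact lt_of_lt_of_le hc (hbnd t).1
    · intro c hc
      rcases lt_or_ge (h 0) c with hcase | hcase
      · filter_upwards [Iic_mem_atBot 0] with t ht
        exact lt_of_le_of_lt (hA t ht) hcase
      · -- c ≤ h 0 < -1+ε ≤ -1/2 < 0
        have hcneg : c < 0 := by
          linarith [hq0, hcase, hεle]
        have hex : ∃ t0, t0 ≤ 0 ∧ h t0 < c := by
          by_contra hno
          push_neg at hno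
          have hlow : ∀ t, t ≤ 0 → κ * (1 - c^2) ≤ h' t := by
            intro t ht
            have h1 : c ≤ h t := hno t ht
            have h2 : h t ≤ -1 + ε := hIn t ht
            have h3 : h t < 0 := by linarith [hεle]
            have hsq : h t ^ 2 ≤ c ^ 2 := by nlinarith
            have := hfield _ (horb t) h2
            have : κ * (1 - h t ^ 2) ≤ h' t := this
            nlinarith
          have hδ' : 0 < κ * (1 - c^2) := by
            have hc1 : -1 < c := hc
            have hcc : c^2 < 1 := by
              nlinarith [mul_pos (show (0:ℝ) < 1 - c by linarith) (show (0:ℝ) < 1 + c by linarith)]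
            exact mul_pos hκpos (by linarith)
          set t1 : ℝ := (-2 - h 0) / (κ * (1 - c^2)) with ht1
          have ht1le : t1 ≤ 0 := by
            apply div_nonpos_of_nonpos_of_nonneg _ hδ'.le
            have := (hbnd 0).1; linarith
          have := linear_bound hd hlow t1 ht1le
          rw [ht1] at this
          rw [mul_div_cancel₀ _ (ne_of_gt hδ')] at this
          have := (hbnd t1).1
          linarith
        obtain ⟨t0, ht0, hht0⟩ := hex
        filter_upwards [Iic_mem_atBot t0] with t ht
        exact lt_of_le_of_lt (hmono2 t0 t ht ht0) hht0
  -- convergence of the orbit to pS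
  have hD : Tendsto (fun t => Φ t q) atBot (𝓝 pS) := by
    rw [tendsto_iff_dist_tendsto_zero]
    have heq : (fun t => dist (Φ t q) pS) = fun t => Real.sqrt (2 + 2 * h t) := by
      funext t; exact dist_pS_sq (horb t)
    rw [heq]
    have h2 : Tendsto (fun t => 2 + 2 * h t) atBot (𝓝 (2 + 2 * (-1))) :=
      (hC.const_mul 2).const_add 2
    have h0 : (2:ℝ) + 2 * (-1) = 0 := by norm_num
    rw [h0] at h2
    have h3 := (Real.continuous_sqrt.tendsto 0).comp h2
    rw [Real.sqrt_zero] at h3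
    exact h3
  -- conclusion
  ext u
  simp only [mem_singleton_iff]
  constructor
  · rintro ⟨T, hT, hconv⟩
    exact tendsto_nhds_unique hconv (hD.comp hT)
  · rintro rfl
    refine ⟨fun n => -(n : ℝ), ?_, ?_⟩
    · exact tendsto_neg_atBot_iff.mpr tendsto_natCast_atTop_atTop
    · exact hD.comp (tendsto_neg_atBot_iff.mpr tendsto_natCast_atTop_atTop)

/-- The south pole is a repelling focus for the flow of the vector field `fVF F`; in
particular, there is a neighbourhood `V` of the south pole in the sphere such that the
α-limit set of every point of `V` is the south pole. -/
theorem south_pole_repelling_focus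
    (O : Set E3) (hO : IsRegionIn Sph O) (hsc : SimplyConnectedSpace O)
    (hpS : pS ∈ O) (hpN : pN ∈ frontierIn Sph O)
    (F : E3 → ℝ) (hFsm : SmoothOnSphere F) (hFan : AnalyticOnSphere F O)
    (hFne : ∀ u ∈ O, F u ≠ 0) (hF0 : ∀ u ∈ frontierIn Sph O, F u = 0)
    (Φ : ℝ → E3 → E3) (hΦ : IsFlowOf (fVF F) Φ) :
    ∃ V : Set E3, V ⊆ Sph ∧ V ∈ 𝓝[Sph] pS ∧
      ∀ q ∈ V, alphaLimitSet Φ q = {pS} := by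
  exact south_pole_aux F hFsm.1 (hFne pS hpS) Φ hΦ
end
end

section
/- Let n ≥ 2 be an integer and let x, y ∈ ℝ. Define the complex polynomials p(z) = z^{2n} + n z^{n+1} − 2x z^n + n z^{n−1} + 1 and q(z) = z^{2n} − n z^{n+1} + 2iy z^n + n z^{n−1} − 1. If z₀ ∈ ℂ satisfies p(z₀) = 0 and q(z₀) = 0, then |z₀| = 1. -/
noncomputable section

open Filter Topology Set

/-- Any common root of the polynomials `p(z) = z^{2n} + n z^{n+1} − 2x z^n + n z^{n−1} + 1`
and `q(z) = z^{2n} − n z^{n+1} + 2iy z^n + n z^{n−1} − 1` lies on the unit circle. -/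
theorem common_root_on_unit_circle (n : ℕ) (hn : 2 ≤ n) (x y : ℝ) (z₀ : ℂ)
    (hp : z₀ ^ (2 * n) + (n : ℂ) * z₀ ^ (n + 1) - 2 * (x : ℂ) * z₀ ^ n +
      (n : ℂ) * z₀ ^ (n - 1) + 1 = 0)
    (hq : z₀ ^ (2 * n) - (n : ℂ) * z₀ ^ (n + 1) + 2 * Complex.I * (y : ℂ) * z₀ ^ n +
      (n : ℂ) * z₀ ^ (n - 1) - 1 = 0) :
    ‖z₀‖ = 1 := by
  obtain ⟨m, rfl⟩ : ∃ m, n = m + 2 := ⟨n - 2, by omega⟩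
  rw [show m + 2 - 1 = m + 1 by omega] at hp hq
  have hz0 : z₀ ≠ 0 := by
    intro h
    rw [h] at hp
    simp [zero_pow] at hp
  have E1 : ((x:ℂ) + Complex.I * (y:ℂ)) * z₀ ^ (m + 2) =
      ((m+2 : ℕ) : ℂ) * z₀ ^ (m + 3) + 1 := by
    linear_combination (hq - hp) / 2
  have E2 : ((x:ℂ) - Complex.I * (y:ℂ)) * z₀ ^ (m + 2) =
      z₀ ^ (2 * (m + 2)) + ((m+2 : ℕ) : ℂ) * z₀ ^ (m + 1) := by
    linear_combination (-hq - hp) / 2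
  have E2' := congrArg (starRingEnd ℂ) E2
  simp only [map_mul, map_add, map_sub, map_pow, map_natCast, map_one,
    Complex.conj_ofReal, Complex.conj_I] at E2'
  have E3 : (((m+2 : ℕ) : ℂ) * z₀ ^ (m + 3) + 1) * ((starRingEnd ℂ) z₀) ^ (m + 2) =
      (((starRingEnd ℂ) z₀) ^ (2 * (m + 2)) +
        ((m+2 : ℕ) : ℂ) * ((starRingEnd ℂ) z₀) ^ (m + 1)) * z₀ ^ (m + 2) := by
    linear_combination z₀ ^ (m + 2) * E2' - ((starRingEnd ℂ) z₀) ^ (m + 2) * E1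
  set r : ℝ := ‖z₀‖ with hr
  have hzc : z₀ * (starRingEnd ℂ) z₀ = ((r ^ 2 : ℝ) : ℂ) := by
    rw [Complex.mul_conj, ← Complex.sq_norm]
  have T : ((m+2 : ℕ) : ℂ) * z₀ * (z₀ * (starRingEnd ℂ) z₀) ^ (m + 1) *
      (z₀ * (starRingEnd ℂ) z₀ - 1) =
      ((starRingEnd ℂ) z₀) ^ (m + 2) * ((z₀ * (starRingEnd ℂ) z₀) ^ (m + 2) - 1) := by
    linear_combination E3
  rw [hzc] at T
  rw [show ((r ^ 2 : ℝ) : ℂ) - 1 = ((r ^ 2 - 1 : ℝ) : ℂ) by push_cast; ring,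
      show (((r ^ 2 : ℝ) : ℂ)) ^ (m + 1) = (((r ^ 2) ^ (m + 1) : ℝ) : ℂ) by push_cast; ring,
      show (((r ^ 2 : ℝ) : ℂ)) ^ (m + 2) - 1 = (((r ^ 2) ^ (m + 2) - 1 : ℝ) : ℂ) by
        push_cast; ring] at T
  have habs := congrArg norm T
  simp only [norm_mul, norm_pow, Complex.norm_real, Real.norm_eq_abs, Complex.norm_natCast,
    Complex.norm_conj] at habs
  rw [sq_abs] at habs
  -- habs : ↑(m+2) * r * (r^2)^(m+1) * |r^2 - 1| = r^(m+2) * |(r^2)^(m+2) - 1|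
  by_contra hr1
  have hr0 : 0 < r := norm_pos_iff.mpr hz0
  have hr2 : r ^ 2 ≠ 1 := by
    intro h
    have h' : (r - 1) * (r + 1) = 0 := by nlinarith
    rcases mul_eq_zero.mp h' with h'' | h''
    · exact hr1 (by linarith)
    · linarith
  set S : ℝ := ∑ k ∈ Finset.range (m + 2), (r ^ 2) ^ k with hS
  have hSpos : 0 < S := by
    apply Finset.sum_pos
    · intro k _; positivity
    · exact ⟨0, Finset.mem_range.mpr (by omega)⟩
  have hgeom : (r ^ 2) ^ (m + 2) - 1 = S * (r ^ 2 - 1) := (geom_sum_mul (r ^ 2) (m + 2)).symm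
  rw [hgeom, abs_mul, abs_of_nonneg hSpos.le] at habs
  -- cancel |r^2 - 1| and powers of r
  have hdpos : 0 < |r ^ 2 - 1| := abs_pos.mpr (sub_ne_zero.mpr hr2)
  rw [← hr] at habs
  have key : ((m+2 : ℕ) : ℝ) * r ^ (m + 1) = S := by
    have h1 : ((m+2 : ℕ) : ℝ) * r * (r ^ 2) ^ (m + 1) = r ^ (m + 2) * S := by
      apply mul_right_cancel₀ (ne_of_gt hdpos)
      linear_combination habs
    have h2 : (r ^ 2) ^ (m + 1) = r ^ (m + 1) * r ^ (m + 1) := by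
      rw [← pow_add, ← pow_mul]; ring_nf
    have hrp : (0:ℝ) < r ^ (m + 2) := by positivity
    apply mul_left_cancel₀ (ne_of_gt hrp)
    calc r ^ (m + 2) * (((m+2 : ℕ) : ℝ) * r ^ (m + 1))
        = ((m+2 : ℕ) : ℝ) * r * (r ^ 2) ^ (m + 1) := by rw [h2]; ring
      _ = r ^ (m + 2) * S := h1
  -- now contradiction: S > (m+2) * r^(m+1)
  have hrm : r ^ (m + 1) ≠ 1 := by
    rcases lt_trichotomy r 1 with h | h | h
    · exact ne_of_lt (pow_lt_one₀ hr0.le h (by omega))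
    · exact absurd h hr1
    · exact ne_of_gt (one_lt_pow₀ h (by omega))
  have hterm : ∀ k ∈ Finset.range (m + 2),
      2 * r ^ (m + 1) ≤ (r ^ 2) ^ k + (r ^ 2) ^ (m + 1 - k) := by
    intro k hk
    have hk' : k ≤ m + 1 := by simpa [Nat.lt_succ_iff] using Finset.mem_range.mp hk
    have hmul : r ^ k * r ^ (m + 1 - k) = r ^ (m + 1) := by
      rw [← pow_add]; congr 1; omega
    have e1 : (r ^ 2) ^ k = (r ^ k) ^ 2 := by rw [← pow_mul, ← pow_mul]; ring_nf
    have e2 : (r ^ 2) ^ (m + 1 - k) = (r ^ (m + 1 - k)) ^ 2 := by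
      rw [← pow_mul, ← pow_mul]; ring_nf
    nlinarith [sq_nonneg (r ^ k - r ^ (m + 1 - k))]
  have hstrict : 2 * r ^ (m + 1) < (r ^ 2) ^ 0 + (r ^ 2) ^ (m + 1 - 0) := by
    have e2 : (r ^ 2) ^ (m + 1) = (r ^ (m + 1)) ^ 2 := by rw [← pow_mul, ← pow_mul]; ring_nf
    have h0 : (1 : ℝ) - r ^ (m + 1) ≠ 0 := sub_ne_zero.mpr (Ne.symm hrm)
    have hsq : 0 < (1 - r ^ (m + 1)) ^ 2 := (sq_nonneg _).lt_of_ne (Ne.symm (pow_ne_zero 2 h0))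
    simp only [pow_zero, Nat.sub_zero]
    nlinarith
  have hsum : ∑ _k ∈ Finset.range (m + 2), 2 * r ^ (m + 1) <
      ∑ k ∈ Finset.range (m + 2), ((r ^ 2) ^ k + (r ^ 2) ^ (m + 1 - k)) :=
    Finset.sum_lt_sum (fun k hk => hterm k hk)
      ⟨0, Finset.mem_range.mpr (by omega), hstrict⟩
  have hrefl : ∑ k ∈ Finset.range (m + 2), (r ^ 2) ^ (m + 2 - 1 - k) = S :=
    Finset.sum_range_reflect (fun k => (r ^ 2) ^ k) (m + 2)
  have h2S : ∑ k ∈ Finset.range (m + 2), ((r ^ 2) ^ k + (r ^ 2) ^ (m + 1 - k)) = 2 * S := by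
    rw [Finset.sum_add_distrib]
    simp only [show m + 2 - 1 = m + 1 from rfl] at hrefl
    rw [hrefl, ← hS]
    ring
  have hconst : ∑ _k ∈ Finset.range (m + 2), 2 * r ^ (m + 1) =
      ((m + 2 : ℕ) : ℝ) * (2 * r ^ (m + 1)) := by
    rw [Finset.sum_const, Finset.card_range, nsmul_eq_mul]
  rw [hconst, h2S] at hsum
  nlinarith [hsum, key]
end
end

section
/- Let n ≥ 2 be an integer, set k = n + 1, and let x, y ∈ ℝ. Define p(z) = z^{2n} + n z^{n+1} − 2x z^n + n z^{n−1} + 1 and q(z) = z^{2n} − n z^{n+1} + 2iy z^n + n z^{n−1} − 1. Then (x,y) lies on the k-cusped hypocycloid H_k if and only if p and q have a common root in ℂ. -/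
noncomputable section

open Filter Topology Set

/-- A point `(x,y)` lies on the `(n+1)`-cusped hypocycloid if and only if the polynomials
`p` and `q` have a common complex root. -/
theorem hypocycloid_mem_iff_common_root (n : ℕ) (hn : 2 ≤ n) (x y : ℝ) :
    (x, y) ∈ hypocycloid (n + 1) ↔
      ∃ z : ℂ, z ^ (2 * n) + (n : ℂ) * z ^ (n + 1) - 2 * (x : ℂ) * z ^ n +
          (n : ℂ) * z ^ (n - 1) + 1 = 0 ∧
        z ^ (2 * n) - (n : ℂ) * z ^ (n + 1) + 2 * Complex.I * (y : ℂ) * z ^ n +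
          (n : ℂ) * z ^ (n - 1) - 1 = 0 := by
  obtain ⟨m, rfl⟩ : ∃ m, n = m + 1 := ⟨n - 1, by omega⟩
  have hm : 1 ≤ m := by omega
  have hcast : ((m + 1 + 1 : ℕ) : ℝ) - 1 = (m : ℝ) + 1 := by push_cast; ring
  simp only [Nat.add_sub_cancel]
  constructor
  · rintro ⟨θ, hθ⟩
    rw [Prod.mk.injEq] at hθ
    obtain ⟨hx, hy⟩ := hθ
    rw [hcast] at hx hy
    set a : ℂ := Complex.exp (θ * Complex.I) with ha_def
    set b : ℂ := (Real.cos θ : ℂ) - (Real.sin θ : ℂ) * Complex.I with hb_def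
    have ha : a = (Real.cos θ : ℂ) + (Real.sin θ : ℂ) * Complex.I := by
      rw [ha_def, Complex.exp_mul_I, ← Complex.ofReal_cos, ← Complex.ofReal_sin]
    have han : a ^ (m + 1) = (Real.cos (((m : ℝ) + 1) * θ) : ℂ) +
        (Real.sin (((m : ℝ) + 1) * θ) : ℂ) * Complex.I := by
      rw [ha_def, ← Complex.exp_nat_mul]
      have : ((m + 1 : ℕ) : ℂ) * (↑θ * Complex.I) = ((((m : ℝ) + 1) * θ : ℝ) : ℂ) * Complex.I := by
        push_cast; ring
      rw [this, Complex.exp_mul_I, ← Complex.ofReal_cos, ← Complex.ofReal_sin]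
    have hbn : b ^ (m + 1) = (Real.cos (((m : ℝ) + 1) * θ) : ℂ) -
        (Real.sin (((m : ℝ) + 1) * θ) : ℂ) * Complex.I := by
      have hb : b = (starRingEnd ℂ) a := by
        rw [ha, hb_def, map_add, map_mul, Complex.conj_ofReal, Complex.conj_ofReal,
          Complex.conj_I]
        ring
      rw [hb, ← map_pow, han, map_add, map_mul, Complex.conj_ofReal, Complex.conj_ofReal,
        Complex.conj_I]
      ring
    have h1 : (Real.cos θ : ℂ) ^ 2 + (Real.sin θ : ℂ) ^ 2 = 1 := by
      exact_mod_cast congrArg (fun t : ℝ => (t : ℂ)) (Real.cos_sq_add_sin_sq θ)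
    have hab : a * b = 1 := by
      rw [ha, hb_def]
      linear_combination h1 - (Real.sin θ : ℂ) ^ 2 * Complex.I_sq
    have hpow : a ^ (m + 1) * b ^ (m + 1) = 1 := by
      rw [← mul_pow, hab, one_pow]
    have hx2 : 2 * (x : ℂ) = ((m : ℂ) + 1) * (a + b) + a ^ (m + 1) + b ^ (m + 1) := by
      rw [han, hbn, hx, ha, hb_def]; push_cast; ring_nf
    have hy2 : 2 * Complex.I * (y : ℂ) = ((m : ℂ) + 1) * (a - b) - a ^ (m + 1) + b ^ (m + 1) := by
      rw [han, hbn, hy, ha, hb_def]; push_cast; ring_nf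
    refine ⟨a, ?_, ?_⟩
    · push_cast
      linear_combination (-(a ^ (m + 1))) * hx2 + (-(((m : ℂ) + 1)) * a ^ m) * hab - hpow
    · push_cast
      linear_combination a ^ (m + 1) * hy2 + (-(((m : ℂ) + 1)) * a ^ m) * hab + hpow
  · rintro ⟨z, hp, hq⟩
    push_cast at hp hq
    have hz0 : z ≠ 0 := by
      rintro rfl
      rw [zero_pow (by omega), zero_pow (by omega), zero_pow (by omega),
        zero_pow (by omega)] at hp
      simp at hp
    have E1 : ((m : ℂ) + 1) * z ^ (m + 2) - ((x : ℂ) + (y : ℂ) * Complex.I) * z ^ (m + 1) + 1 = 0 := by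
      linear_combination (1 / 2 : ℂ) * hp - (1 / 2 : ℂ) * hq
    have E2' : z ^ m * (z ^ (m + 2) - ((x : ℂ) - (y : ℂ) * Complex.I) * z + ((m : ℂ) + 1)) = 0 := by
      linear_combination (1 / 2 : ℂ) * hp + (1 / 2 : ℂ) * hq
    have E2 : z ^ (m + 2) - ((x : ℂ) - (y : ℂ) * Complex.I) * z + ((m : ℂ) + 1) = 0 := by
      rcases mul_eq_zero.mp E2' with h | h
      · exact absurd h (pow_ne_zero _ hz0)
      · exact h
    have cE2 : (starRingEnd ℂ) z ^ (m + 2) - ((x : ℂ) + (y : ℂ) * Complex.I) * (starRingEnd ℂ) z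
        + ((m : ℂ) + 1) = 0 := by
      have := congrArg (starRingEnd ℂ) E2
      simpa [map_pow, Complex.conj_ofReal] using this
    set R : ℝ := ‖z‖ with hR_def
    have hR0 : 0 < R := norm_pos_iff.mpr hz0
    have hzz : z * (starRingEnd ℂ) z = ((R : ℂ)) ^ 2 := by
      rw [Complex.mul_conj]
      norm_cast
      rw [hR_def, Complex.sq_norm]
    have hpz : (z * (starRingEnd ℂ) z) ^ (m + 1) = (((R : ℂ)) ^ 2) ^ (m + 1) := by
      rw [hzz]
    have keyC : (((R ^ 2 - 1 : ℝ)) : ℂ) * ((((m : ℝ) + 1 : ℝ) : ℂ) * z ^ (m + 1)) =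
        (((R ^ (2 * m + 2) - 1 : ℝ)) : ℂ) * (starRingEnd ℂ) z := by
      push_cast
      linear_combination (starRingEnd ℂ) z * E1 - z ^ (m + 1) * cE2
        + (-(((m : ℂ) + 1)) * z ^ (m + 1)) * hzz + (starRingEnd ℂ) z * hpz
    have hre : |R ^ 2 - 1| * (((m : ℝ) + 1) * R ^ (m + 1)) = |R ^ (2 * m + 2) - 1| * R := by
      have h := congrArg (fun w : ℂ => ‖w‖) keyC
      rw [norm_mul, norm_mul, norm_mul, norm_pow, Complex.norm_real, Complex.norm_real,
        Complex.norm_real, Real.norm_eq_abs, Real.norm_eq_abs, Real.norm_eq_abs, Complex.norm_conj, ← hR_def,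
        _root_.abs_of_nonneg (by positivity : (0:ℝ) ≤ (m : ℝ) + 1)] at h
      exact h
    have hR1 : R = 1 := by
      by_cases hR2 : R ^ 2 = 1
      · nlinarith
      · have hfact : R ^ (2 * m + 2) - 1 = (R ^ 2 - 1) * ∑ i ∈ Finset.range (m + 1), R ^ (2 * i) := by
          have h1 : R ^ (2 * m + 2) = (R ^ 2) ^ (m + 1) := by
            rw [← pow_mul]; ring_nf
          have h2 : ∀ i, (R ^ 2) ^ i = R ^ (2 * i) := fun i => by rw [← pow_mul]
          rw [h1]
          calc (R ^ 2) ^ (m + 1) - 1 = (R ^ 2 - 1) * ∑ i ∈ Finset.range (m + 1), (R ^ 2) ^ i := by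
                linear_combination -geom_sum_mul (R ^ 2) (m + 1)
            _ = _ := by rw [Finset.sum_congr rfl fun i _ => h2 i]
        have hsumnn : (0 : ℝ) ≤ ∑ i ∈ Finset.range (m + 1), R ^ (2 * i) :=
          Finset.sum_nonneg fun i _ => by positivity
        rw [hfact, abs_mul, _root_.abs_of_nonneg hsumnn] at hre
        have habs : |R ^ 2 - 1| ≠ 0 := by
          simpa [sub_eq_zero] using hR2
        have hre2 : ((m : ℝ) + 1) * R ^ (m + 1) = (∑ i ∈ Finset.range (m + 1), R ^ (2 * i)) * R := by
          have := mul_left_cancel₀ habs (by linarith [hre] : |R ^ 2 - 1| * (((m : ℝ) + 1) * R ^ (m + 1)) = |R ^ 2 - 1| * ((∑ i ∈ Finset.range (m + 1), R ^ (2 * i)) * R))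
          exact this
        have hsum : ∑ i ∈ Finset.range (m + 1), R ^ (2 * i) = ((m : ℝ) + 1) * R ^ m := by
          have h3 : R * (∑ i ∈ Finset.range (m + 1), R ^ (2 * i)) =
              R * (((m : ℝ) + 1) * R ^ m) := by
            calc R * (∑ i ∈ Finset.range (m + 1), R ^ (2 * i))
                = (∑ i ∈ Finset.range (m + 1), R ^ (2 * i)) * R := by ring
              _ = ((m : ℝ) + 1) * R ^ (m + 1) := hre2.symm
              _ = R * (((m : ℝ) + 1) * R ^ m) := by ring
          exact mul_left_cancel₀ (ne_of_gt hR0) h3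
        have hsq : ∑ i ∈ Finset.range (m + 1), (R ^ i - R ^ (m - i)) ^ 2 = 0 := by
          have hterm : ∀ i ∈ Finset.range (m + 1),
              (R ^ i - R ^ (m - i)) ^ 2 = R ^ (2 * i) + R ^ (2 * (m - i)) - 2 * R ^ m := by
            intro i hi
            rw [Finset.mem_range] at hi
            have hmi : i + (m - i) = m := by omega
            have h2 : R ^ i * R ^ (m - i) = R ^ m := by rw [← pow_add, hmi]
            have e1 : (R ^ i) ^ 2 = R ^ (2 * i) := by rw [← pow_mul]; ring_nf
            have e2 : (R ^ (m - i)) ^ 2 = R ^ (2 * (m - i)) := by rw [← pow_mul]; ring_nf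
            calc (R ^ i - R ^ (m - i)) ^ 2
                = (R ^ i) ^ 2 - 2 * (R ^ i * R ^ (m - i)) + (R ^ (m - i)) ^ 2 := by ring
              _ = _ := by rw [h2, e1, e2]; ring
          rw [Finset.sum_congr rfl hterm]
          have hrefl : ∑ i ∈ Finset.range (m + 1), R ^ (2 * (m - i)) =
              ∑ i ∈ Finset.range (m + 1), R ^ (2 * i) := by
            have := Finset.sum_range_reflect (fun i => R ^ (2 * i)) (m + 1)
            simpa using this
          rw [Finset.sum_sub_distrib, Finset.sum_add_distrib, hrefl, Finset.sum_const,
            Finset.card_range, hsum]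
          ring
        have hzero := (Finset.sum_eq_zero_iff_of_nonneg
          (fun i _ => sq_nonneg (R ^ i - R ^ (m - i)))).mp hsq 0 (Finset.mem_range.mpr (by omega))
        have hRm : R ^ m = 1 := by
          have := pow_eq_zero_iff (n := 2) (by norm_num) |>.mp hzero
          simp at this
          linarith [this]
        rcases lt_trichotomy R 1 with h | h | h
        · exact absurd hRm (by have := pow_lt_one₀ (le_of_lt hR0) h (by omega : m ≠ 0); linarith)
        · exact h
        · exact absurd hRm (by have := one_lt_pow₀ h (by omega : m ≠ 0); linarith)
    have hu : z * (starRingEnd ℂ) z = 1 := by rw [hzz, hR1]; norm_num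
    have hum1 : z ^ (m + 1) * (starRingEnd ℂ) z ^ (m + 1) = 1 := by
      rw [← mul_pow, hu, one_pow]
    have hw : (x : ℂ) + (y : ℂ) * Complex.I = ((m : ℂ) + 1) * z + (starRingEnd ℂ) z ^ (m + 1) := by
      linear_combination (-((starRingEnd ℂ) z ^ (m + 1))) * E1
        + (((m : ℂ) + 1) * z - ((x : ℂ) + (y : ℂ) * Complex.I)) * hum1
    set θ : ℝ := z.arg with hθ_def
    have hz : z = Complex.exp (θ * Complex.I) := by
      conv_lhs => rw [← Complex.norm_mul_exp_arg_mul_I z]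
      rw [← hR_def, hR1, ← hθ_def]
      simp
    have hzc : z = (Real.cos θ : ℂ) + (Real.sin θ : ℂ) * Complex.I := by
      rw [hz, Complex.exp_mul_I, ← Complex.ofReal_cos, ← Complex.ofReal_sin]
    have hzn : z ^ (m + 1) = (Real.cos (((m : ℝ) + 1) * θ) : ℂ) +
        (Real.sin (((m : ℝ) + 1) * θ) : ℂ) * Complex.I := by
      rw [hz, ← Complex.exp_nat_mul]
      have : ((m + 1 : ℕ) : ℂ) * (↑θ * Complex.I) = ((((m : ℝ) + 1) * θ : ℝ) : ℂ) * Complex.I := by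
        push_cast; ring
      rw [this, Complex.exp_mul_I, ← Complex.ofReal_cos, ← Complex.ofReal_sin]
    have hconj : (starRingEnd ℂ) z ^ (m + 1) = (Real.cos (((m : ℝ) + 1) * θ) : ℂ) -
        (Real.sin (((m : ℝ) + 1) * θ) : ℂ) * Complex.I := by
      rw [← map_pow, hzn, map_add, map_mul, Complex.conj_ofReal, Complex.conj_ofReal,
        Complex.conj_I]
      ring
    rw [hconj, hzc] at hw
    have hw2 : (x : ℂ) + (y : ℂ) * Complex.I =
        ((((m : ℝ) + 1) * Real.cos θ + Real.cos (((m : ℝ) + 1) * θ) : ℝ) : ℂ) +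
        ((((m : ℝ) + 1) * Real.sin θ - Real.sin (((m : ℝ) + 1) * θ) : ℝ) : ℂ) * Complex.I := by
      rw [hw]; push_cast; ring
    have hx : x = ((m : ℝ) + 1) * Real.cos θ + Real.cos (((m : ℝ) + 1) * θ) := by
      have h := congrArg Complex.re hw2
      simp only [Complex.add_re, Complex.mul_re, Complex.ofReal_re, Complex.ofReal_im,
        Complex.I_re, Complex.I_im, mul_zero, zero_mul, mul_one, sub_zero, zero_sub,
        add_zero, sub_self, neg_zero] at h
      linarith
    have hy : y = ((m : ℝ) + 1) * Real.sin θ - Real.sin (((m : ℝ) + 1) * θ) := by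
      have h := congrArg Complex.im hw2
      simp only [Complex.add_im, Complex.mul_im, Complex.ofReal_re, Complex.ofReal_im,
        Complex.I_re, Complex.I_im, mul_zero, zero_mul, mul_one, sub_zero, zero_sub,
        add_zero, zero_add, sub_self, neg_zero] at h
      linarith
    exact ⟨θ, by rw [Prod.mk.injEq, hcast]; exact ⟨hx, hy⟩⟩

end
end
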